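/- arXiv:1402.2543 — 8 statements merged into one kernel-verified Lean document; each statement's English description precedes it below -/
import Mathlib

section
/- Let d ≥ 1 be an integer, let G be a d-regular triangle-free simple graph on a finite vertex set V, and let {u,v} be an edge of G. Then for every pair of labels k1, k2 ∈ {a,b} and integers 0 ≤ i1, i2 ≤ d, the number of functions c : V → {a,b} satisfying c(u) = k1, ℓ_c(u) = i1, c(v) = k2 and ℓ_c(v) = i2, divided by 2^|V|, equals 4^{-d}·C(d-1,i1)·C(d-1,i2) if k1 ≠ k2, and equals 4^{-d}·C(d-1,i1-1)·C(d-1,i2-1) if k1 = k2. -/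
/-!
Triangle-freeness makes `A = N(u) \ {v}` and `B = N(v) \ {u}` disjoint, and neither contains
`u` or `v`. Once `c u = k1` and `c v = k2` are fixed, `ℓ_c(u)` is the number of `k1`-coloured
vertices of `A`, plus one if `k1 = k2` (then `v` counts), and symmetrically for `v`. The colours on
`A`, on `B` and on the remaining vertices are chosen independently, so the count factors as
`C(|A|, ·) · C(|B|, ·) · 2^(|V| - |A| - |B| - 2)` with `|A| = |B| = d - 1`.
-/

/-- Binomial coefficient with integer lower index, following the convention
`C(n,k) = 0` for `k < 0` (and `k > n`). -/
def chooseZ (n : ℕ) (k : ℤ) : ℕ := if 0 ≤ k then n.choose k.toNat else 0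

open Finset

theorem card_powerset_filter_card_eq_chooseZ {α : Type*} (s : Finset α) (j : ℤ) :
    #{t ∈ s.powerset | (#t : ℤ) = j} = chooseZ #s j := by
  unfold chooseZ
  split_ifs with hj
  · lift j to ℕ using hj
    simp [← powersetCard_eq_filter]
  · rw [filter_false_of_mem fun t _ => by omega, card_empty]

theorem card_filter_eq_card_filter_erase_add_ite {α : Type*} [DecidableEq α] {s : Finset α}
    {w : α} (hw : w ∈ s) (p : α → Prop) [DecidablePred p] :
    #{x ∈ s | p x} = #{x ∈ s.erase w | p x} + if p w then 1 else 0 := by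
  conv_lhs => rw [← insert_erase hw]
  rw [filter_insert]
  split_ifs <;> simp [card_insert_of_notMem]

section Colorings

variable {V : Type*} [Fintype V] [DecidableEq V]

theorem card_filter_levelSet_and_eq_mul_card_powerset_filter (s : Finset V) (b : Bool)
    (Q : Finset V → Prop) [DecidablePred Q] (P : (V → Bool) → Prop) [DecidablePred P]
    (hP : ∀ c c', (∀ x ∉ s, c x = c' x) → P c → P c') :
    #{c | Q {x ∈ s | c x = b} ∧ P c} =
      #{c | (∀ x ∈ s, c x = b) ∧ P c} * #{t ∈ s.powerset | Q t} := by
  have levelSet_piecewise (g : V → Bool) (hg : ∀ x ∈ s, g x = b) (t : Finset V)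
      (ht : t ⊆ s) :
      {x ∈ s | (s \ t).piecewise (fun _ => !b) g x = b} = t := by
    ext x
    by_cases hxt : x ∈ t
    · simp [hxt, ht hxt, hg x (ht hxt)]
    · by_cases hxs : x ∈ s <;> simp [hxs, hxt]
  rw [← card_product]
  refine card_nbij' (fun c => (s.piecewise (fun _ => b) c, {x ∈ s | c x = b}))
    (fun p => (s \ p.2).piecewise (fun _ => !b) p.1) ?_ ?_ ?_ ?_
  · intro c hc
    simp only [mem_coe, mem_filter, mem_univ, true_and, mem_product, mem_powerset] at hc ⊢
    exact ⟨⟨fun x hx => by simp [hx], hP c _ (fun x hx => by simp [hx]) hc.2⟩,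
      filter_subset _ _, hc.1⟩
  · rintro ⟨g, t⟩ hgt
    simp only [mem_coe, mem_filter, mem_univ, true_and, mem_product, mem_powerset] at hgt ⊢
    obtain ⟨⟨hg, hPg⟩, ht, hQ⟩ := hgt
    rw [levelSet_piecewise g hg t ht]
    exact ⟨hQ, hP g _ (fun x hx => by simp [hx]) hPg⟩
  · intro c _
    funext x
    by_cases hxs : x ∈ s
    · cases h : c x <;> cases b <;> simp [hxs, h]
    · simp [hxs]
  · rintro ⟨g, t⟩ hgt
    simp only [mem_coe, mem_filter, mem_univ, true_and, mem_product, mem_powerset] at hgt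
    obtain ⟨⟨hg, -⟩, ht, -⟩ := hgt
    refine Prod.ext ?_ (levelSet_piecewise g hg t ht)
    funext x
    by_cases hxs : x ∈ s <;> simp [hxs, hg]

theorem card_filter_card_levelSet_eq_and_mul_two_pow (s : Finset V) (b : Bool)
    (P : (V → Bool) → Prop) [DecidablePred P]
    (hP : ∀ c c', (∀ x ∉ s, c x = c' x) → P c → P c') (j : ℤ) :
    #{c | (#{x ∈ s | c x = b} : ℤ) = j ∧ P c} * 2 ^ #s = chooseZ #s j * #{c | P c} := by
  have total := card_filter_levelSet_and_eq_mul_card_powerset_filter s b (fun _ => True) P hP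
  simp only [true_and, filter_true, card_powerset] at total
  rw [card_filter_levelSet_and_eq_mul_card_powerset_filter s b (fun t => (#t : ℤ) = j) P hP,
    total, card_powerset_filter_card_eq_chooseZ]
  ring

theorem card_filter_apply_eq_and_mul_two (w : V) (b : Bool)
    (P : (V → Bool) → Prop) [DecidablePred P]
    (hP : ∀ c c', (∀ x ≠ w, c x = c' x) → P c → P c') :
    #{c | c w = b ∧ P c} * 2 = #{c | P c} := by
  have := card_filter_card_levelSet_eq_and_mul_two_pow {w} b P (by simpa using hP) 1
  simpa [chooseZ, filter_singleton, apply_ite] using this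

theorem card_filter_card_levelSet_eq_of_disjoint {u v : V} (huv : u ≠ v) {A B : Finset V}
    (hAB : Disjoint A B) (huA : u ∉ A) (huB : u ∉ B) (hvA : v ∉ A) (hvB : v ∉ B)
    (k1 k2 : Bool) (j1 j2 : ℤ) :
    #{c : V → Bool | (#{x ∈ A | c x = k1} : ℤ) = j1 ∧ (#{x ∈ B | c x = k2} : ℤ) = j2 ∧
        c u = k1 ∧ c v = k2} * 2 ^ (#A + #B + 2) =
      chooseZ #A j1 * chooseZ #B j2 * 2 ^ Fintype.card V := by
  have hA := card_filter_card_levelSet_eq_and_mul_two_pow A k1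
    (fun c => (#{x ∈ B | c x = k2} : ℤ) = j2 ∧ c u = k1 ∧ c v = k2) ?_ j1
  · have hB := card_filter_card_levelSet_eq_and_mul_two_pow B k2 (fun c => c u = k1 ∧ c v = k2)
      (fun c c' h ⟨hu, hv⟩ => ⟨(h u huB).symm.trans hu, (h v hvB).symm.trans hv⟩) j2
    have hu := card_filter_apply_eq_and_mul_two u k1 (fun c => c v = k2)
      (fun c c' h hv => (h v huv.symm).symm.trans hv)
    have hv := card_filter_apply_eq_and_mul_two v k2 (fun _ => True) (fun _ _ _ _ => trivial)
    simp only [and_true, filter_true, card_univ, Fintype.card_fun, Fintype.card_bool] at hv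
    linear_combination (2 ^ #B * 4) * hA + (chooseZ #A j1 * 4) * hB
      + (chooseZ #A j1 * chooseZ #B j2 * 2) * hu + chooseZ #A j1 * chooseZ #B j2 * hv
  · rintro c c' h ⟨hB, hu, hv⟩
    refine ⟨?_, (h u huA).symm.trans hu, (h v hvA).symm.trans hv⟩
    have hBc : {x ∈ B | c' x = k2} = {x ∈ B | c x = k2} :=
      filter_congr fun x hx => by rw [h x (disjoint_right.mp hAB hx)]
    rwa [hBc]

end Colorings

namespace SimpleGraph

variable {V : Type*} [Fintype V] {G : SimpleGraph V} [DecidableRel G.Adj]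

theorem CliqueFree.disjoint_neighborFinset (htf : G.CliqueFree 3) {u v : V} (huv : G.Adj u v) :
    Disjoint (G.neighborFinset u) (G.neighborFinset v) := by
  classical
  rw [Finset.disjoint_left]
  intro x hxu hxv
  apply htf {u, v, x}
  rw [is3Clique_triple_iff]
  exact ⟨huv, (mem_neighborFinset _ _ _).mp hxu, (mem_neighborFinset _ _ _).mp hxv⟩

theorem card_filter_card_neighborFinset_filter_eq_mul_two_pow [DecidableEq V]
    (htf : G.CliqueFree 3) {u v : V} (huv : G.Adj u v) (k1 k2 : Bool) (i1 i2 : ℕ) :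
    #{c : V → Bool | c u = k1 ∧ c v = k2 ∧ #{x ∈ G.neighborFinset u | c x = c u} = i1 ∧
        #{x ∈ G.neighborFinset v | c x = c v} = i2} * 2 ^ (G.degree u + G.degree v) =
      chooseZ (G.degree u - 1) (i1 - if k1 = k2 then 1 else 0) *
        chooseZ (G.degree v - 1) (i2 - if k1 = k2 then 1 else 0) * 2 ^ Fintype.card V := by
  have hvu : v ∈ G.neighborFinset u := (G.mem_neighborFinset u v).mpr huv
  have huv' : u ∈ G.neighborFinset v := (G.mem_neighborFinset v u).mpr huv.symm
  set A := (G.neighborFinset u).erase v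
  set B := (G.neighborFinset v).erase u
  have hA : #A + 1 = G.degree u := card_erase_add_one hvu
  have hB : #B + 1 = G.degree v := card_erase_add_one huv'
  have hAB : Disjoint A B :=
    (htf.disjoint_neighborFinset huv).mono (erase_subset _ _) (erase_subset _ _)
  have hfilter : #{c : V → Bool | c u = k1 ∧ c v = k2 ∧
        #{x ∈ G.neighborFinset u | c x = c u} = i1 ∧
        #{x ∈ G.neighborFinset v | c x = c v} = i2} =
      #{c : V → Bool | (#{x ∈ A | c x = k1} : ℤ) = i1 - (if k1 = k2 then 1 else 0) ∧
        (#{x ∈ B | c x = k2} : ℤ) = i2 - (if k1 = k2 then 1 else 0) ∧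
        c u = k1 ∧ c v = k2} := by
    congr 1
    refine filter_congr fun c _ => ?_
    have key (hu : c u = k1) (hv : c v = k2) :
        #{x ∈ G.neighborFinset u | c x = c u} =
            #{x ∈ A | c x = k1} + (if k1 = k2 then 1 else 0) ∧
          #{x ∈ G.neighborFinset v | c x = c v} =
            #{x ∈ B | c x = k2} + (if k1 = k2 then 1 else 0) := by
      rw [card_filter_eq_card_filter_erase_add_ite hvu,
        card_filter_eq_card_filter_erase_add_ite huv', hu, hv]
      simp only [eq_comm (a := k2) (b := k1), A, B, and_self]
    constructor
    · rintro ⟨hu, hv, h1, h2⟩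
      obtain ⟨e1, e2⟩ := key hu hv
      refine ⟨?_, ?_, hu, hv⟩ <;> split_ifs at * <;> omega
    · rintro ⟨h1, h2, hu, hv⟩
      obtain ⟨e1, e2⟩ := key hu hv
      refine ⟨hu, hv, ?_, ?_⟩ <;> split_ifs at * <;> omega
  rw [hfilter, ← hA, ← hB, Nat.add_sub_cancel, Nat.add_sub_cancel,
    show #A + 1 + (#B + 1) = #A + #B + 2 by ring]
  exact card_filter_card_levelSet_eq_of_disjoint (G.ne_of_adj huv) hAB (by simp [A])
    (by simp [B]) (by simp [A]) (by simp [B]) k1 k2 _ _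

end SimpleGraph

theorem stmt0_general {V : Type*} [Fintype V] [DecidableEq V]
    (d : ℕ) (G : SimpleGraph V) [DecidableRel G.Adj]
    (hreg : G.IsRegularOfDegree d) (htf : G.CliqueFree 3)
    (u v : V) (huv : G.Adj u v)
    (k1 k2 : Bool) (i1 i2 : ℕ) :
    ((Finset.univ.filter (fun c : V → Bool =>
        c u = k1 ∧ c v = k2 ∧
        ((G.neighborFinset u).filter (fun x => c x = c u)).card = i1 ∧
        ((G.neighborFinset v).filter (fun x => c x = c v)).card = i2)).card : ℝ)
      / 2 ^ (Fintype.card V)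
    = if k1 ≠ k2 then
        ((d-1).choose i1 * (d-1).choose i2 : ℕ) / (4 : ℝ) ^ d
      else
        ((chooseZ (d-1) ((i1 : ℤ) - 1) * chooseZ (d-1) ((i2 : ℤ) - 1) : ℕ) : ℝ) / 4 ^ d := by
  have hcount := G.card_filter_card_neighborFinset_filter_eq_mul_two_pow htf huv k1 k2 i1 i2
  rw [hreg u, hreg v, ← two_mul, pow_mul] at hcount
  have hrhs : (if k1 ≠ k2 then ((d-1).choose i1 * (d-1).choose i2 : ℕ) / (4 : ℝ) ^ d
      else ((chooseZ (d-1) ((i1 : ℤ) - 1) * chooseZ (d-1) ((i2 : ℤ) - 1) : ℕ) : ℝ) / 4 ^ d) =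
      ((chooseZ (d-1) (i1 - if k1 = k2 then 1 else 0) *
        chooseZ (d-1) (i2 - if k1 = k2 then 1 else 0) : ℕ) : ℝ) / 4 ^ d := by
    split_ifs <;> simp_all [chooseZ]
  rw [hrhs, div_eq_div_iff (by positivity) (by positivity)]
  exact_mod_cast hcount

theorem stmt0 {V : Type*} [Fintype V] [DecidableEq V]
    (d : ℕ) (hd : 1 ≤ d) (G : SimpleGraph V) [DecidableRel G.Adj]
    (hreg : G.IsRegularOfDegree d) (htf : G.CliqueFree 3)
    (u v : V) (huv : G.Adj u v)
    (k1 k2 : Bool) (i1 i2 : ℕ) (hi1 : i1 ≤ d) (hi2 : i2 ≤ d) :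
    ((Finset.univ.filter (fun c : V → Bool =>
        c u = k1 ∧ c v = k2 ∧
        ((G.neighborFinset u).filter (fun x => c x = c u)).card = i1 ∧
        ((G.neighborFinset v).filter (fun x => c x = c v)).card = i2)).card : ℝ)
      / 2 ^ (Fintype.card V)
    = if k1 ≠ k2 then
        ((d-1).choose i1 * (d-1).choose i2 : ℕ) / (4 : ℝ) ^ d
      else
        ((chooseZ (d-1) ((i1 : ℤ) - 1) * chooseZ (d-1) ((i2 : ℤ) - 1) : ℕ) : ℝ) / 4 ^ d :=
  stmt0_general d G hreg htf u v huv k1 k2 i1 i2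
end

section
/- Let d ≥ 1 be an integer, let A : {a,b} × {0,1,…,d} → {a,b} be any function, and let G be a d-regular triangle-free simple graph on a finite vertex set V with edge set E. Then the average, over all 2^|V| functions c : V → {a,b}, of the number of edges {u,v} ∈ E with A(c(u), ℓ_c(u)) ≠ A(c(v), ℓ_c(v)), equals |E| · w_N(A), where w_N(A) is the cut weight of A in the weighted neighbourhood graph. -/
/-- Edge weights of the weighted neighbourhood graph for parameter `d`. -/
noncomputable def wN (d : ℕ) (N1 N2 : Bool × ℕ) : ℝ :=
  if N1.1 ≠ N2.1 then
    ((d-1).choose N1.2 * (d-1).choose N2.2 : ℕ) / (4 : ℝ) ^ d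
  else
    ((chooseZ (d-1) ((N1.2 : ℤ) - 1) * chooseZ (d-1) ((N2.2 : ℤ) - 1) : ℕ) : ℝ) / 4 ^ d

/-- The cut weight `w_N(A)` of a labelling `A` of the weighted neighbourhood graph:
the sum over ordered pairs `(N1, N2)` with `A N1 ≠ A N2` of `wN d N1 N2`. -/
noncomputable def cutWeightN (d : ℕ) (A : Bool × ℕ → Bool) : ℝ :=
  ∑ N1 ∈ Finset.univ ×ˢ Finset.range (d+1), ∑ N2 ∈ Finset.univ ×ˢ Finset.range (d+1),
    if A N1 ≠ A N2 then wN d N1 N2 else 0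

lemma sum_powerset_card_aux {V : Type*} [DecidableEq V] (s : Finset V) (h : ℕ → ℝ) :
    ∑ X ∈ s.powerset, h X.card
      = ∑ j ∈ Finset.range (s.card + 1), (s.card.choose j : ℝ) * h j := by
  rw [Finset.sum_powerset]
  refine Finset.sum_congr rfl fun j hj => ?_
  rw [Finset.sum_congr rfl (fun X hX => by
      rw [(Finset.mem_powersetCard.mp hX).2]),
    Finset.sum_const, Finset.card_powersetCard, nsmul_eq_mul]

lemma cutWeightN_eq (d : ℕ) (hd : 1 ≤ d) (A : Bool × ℕ → Bool) :
    cutWeightN d A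
      = ∑ k1 : Bool, ∑ k2 : Bool, ∑ j1 ∈ Finset.range d, ∑ j2 ∈ Finset.range d,
          ((((d-1).choose j1 : ℝ) * ((d-1).choose j2)) / 4 ^ d) *
            (if A (k1, (if k2 = k1 then 1 else 0) + j1) ≠ A (k2, (if k1 = k2 then 1 else 0) + j2)
              then 1 else 0) := by
  unfold cutWeightN
  simp only [Finset.sum_product]
  refine Finset.sum_congr rfl fun k1 _ => ?_
  rw [Finset.sum_comm]
  refine Finset.sum_congr rfl fun k2 _ => ?_
  by_cases hk : k1 = k2
  · subst hk
    have hw : ∀ i1 i2 : ℕ, wN d (k1, i1) (k1, i2)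
        = ((chooseZ (d-1) ((i1:ℤ) - 1) : ℝ) * (chooseZ (d-1) ((i2:ℤ) - 1))) / 4 ^ d := by
      intro i1 i2; simp [wN]
    rw [Finset.sum_range_succ']
    have h0 : (∑ i2 ∈ Finset.range (d+1),
        if A (k1, 0) ≠ A (k1, i2) then wN d (k1, 0) (k1, i2) else 0) = 0 := by
      refine Finset.sum_eq_zero fun i2 _ => ?_
      rw [hw]
      norm_num [chooseZ]
    rw [h0, add_zero]
    refine Finset.sum_congr rfl fun j1 _ => ?_
    rw [Finset.sum_range_succ']
    have h0' : (if A (k1, j1+1) ≠ A (k1, 0) then wN d (k1, j1+1) (k1, 0) else 0) = 0 := by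
      rw [hw]; norm_num [chooseZ]
    rw [h0', add_zero]
    refine Finset.sum_congr rfl fun j2 _ => ?_
    have hs : ∀ j : ℕ, chooseZ (d-1) (((j+1 : ℕ) : ℤ) - 1) = (d - 1).choose j := by
      intro j; simp [chooseZ]
    rw [hw, hs, hs]
    simp only [eq_self_iff_true, if_true]
    rw [Nat.add_comm 1 j1, Nat.add_comm 1 j2]
    by_cases hA : A (k1, j1 + 1) ≠ A (k1, j2 + 1)
    · rw [if_pos hA, if_pos hA, mul_one]
    · rw [if_neg hA, if_neg hA, mul_zero]
  · have hw : ∀ i1 i2 : ℕ, wN d (k1, i1) (k2, i2)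
        = (((d-1).choose i1 : ℝ) * ((d-1).choose i2)) / 4 ^ d := by
      intro i1 i2; simp [wN, hk]
    rw [Finset.sum_range_succ]
    have h0 : (∑ i2 ∈ Finset.range (d+1),
        if A (k1, d) ≠ A (k2, i2) then wN d (k1, d) (k2, i2) else 0) = 0 := by
      refine Finset.sum_eq_zero fun i2 _ => ?_
      rw [hw, Nat.choose_eq_zero_of_lt (show d-1 < d by omega)]
      simp
    rw [h0, add_zero]
    refine Finset.sum_congr rfl fun j1 _ => ?_
    rw [Finset.sum_range_succ]
    have h0' : (if A (k1, j1) ≠ A (k2, d) then wN d (k1, j1) (k2, d) else 0) = 0 := by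
      rw [hw, Nat.choose_eq_zero_of_lt (show d-1 < d by omega)]
      simp
    rw [h0', add_zero]
    refine Finset.sum_congr rfl fun j2 _ => ?_
    rw [hw]
    have hz1 : (if k2 = k1 then 1 else 0) + j1 = j1 := by simp [Ne.symm hk]
    have hz2 : (if k1 = k2 then 1 else 0) + j2 = j2 := by simp [hk]
    rw [hz1, hz2]
    by_cases hA : A (k1, j1) ≠ A (k2, j2)
    · rw [if_pos hA, if_pos hA, mul_one]
    · rw [if_neg hA, if_neg hA, mul_zero]

lemma key_edge {V : Type*} [Fintype V] [DecidableEq V]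
    (d : ℕ) (hd : 1 ≤ d) (A : Bool × ℕ → Bool)
    (G : SimpleGraph V) [DecidableRel G.Adj]
    (hreg : G.IsRegularOfDegree d) (htf : G.CliqueFree 3)
    (u v : V) (hadj : G.Adj u v) :
    ∑ c : V → Bool,
      (if A (c u, ((G.neighborFinset u).filter (fun y => c y = c u)).card)
          ≠ A (c v, ((G.neighborFinset v).filter (fun y => c y = c v)).card)
        then (1:ℝ) else 0)
      = 2 ^ (Fintype.card V) * cutWeightN d A := by
  classical
  set S := (G.neighborFinset u).erase v with hSdef
  set T := (G.neighborFinset v).erase u with hTdef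
  have huv : u ≠ v := hadj.ne
  have hvNu : v ∈ G.neighborFinset u := by
    rw [SimpleGraph.mem_neighborFinset]; exact hadj
  have huNv : u ∈ G.neighborFinset v := by
    rw [SimpleGraph.mem_neighborFinset]; exact hadj.symm
  have huS : u ∉ S := by
    intro h
    have h' := Finset.mem_of_mem_erase h
    rw [SimpleGraph.mem_neighborFinset] at h'
    exact G.irrefl h'
  have hvS : v ∉ S := Finset.notMem_erase _ _
  have huT : u ∉ T := Finset.notMem_erase _ _
  have hvT : v ∉ T := by
    intro h
    have h' := Finset.mem_of_mem_erase h
    rw [SimpleGraph.mem_neighborFinset] at h'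
    exact G.irrefl h'
  have hdisj : Disjoint S T := by
    rw [Finset.disjoint_left]
    intro y hyS hyT
    have h1 := Finset.mem_of_mem_erase hyS
    have h2 := Finset.mem_of_mem_erase hyT
    rw [SimpleGraph.mem_neighborFinset] at h1 h2
    exact htf {u, v, y} (SimpleGraph.is3Clique_triple_iff.mpr ⟨hadj, h1, h2⟩)
  have hScard : S.card = d - 1 := by
    rw [hSdef, Finset.card_erase_of_mem hvNu, SimpleGraph.card_neighborFinset_eq_degree, hreg u]
  have hTcard : T.card = d - 1 := by
    rw [hTdef, Finset.card_erase_of_mem huNv, SimpleGraph.card_neighborFinset_eq_degree, hreg v]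
  set W : Finset V := insert u (insert v (S ∪ T)) with hWdef
  set R : Finset V := Finset.univ \ W with hRdef
  have hWcard : W.card = 2 * d := by
    rw [hWdef, Finset.card_insert_of_notMem (by
        simp only [Finset.mem_insert, Finset.mem_union]
        push_neg
        exact ⟨huv, huS, huT⟩),
      Finset.card_insert_of_notMem (by
        simp only [Finset.mem_union]
        push_neg
        exact ⟨hvS, hvT⟩),
      Finset.card_union_of_disjoint hdisj, hScard, hTcard]
    omega
  have hVcard : Fintype.card V = 2 * d + R.card := by
    have h1 : R.card = Fintype.card V - W.card := by
      rw [hRdef, Finset.card_sdiff_of_subset (Finset.subset_univ W), Finset.card_univ]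
    have h2 : W.card ≤ Fintype.card V := by
      rw [← Finset.card_univ]; exact Finset.card_le_card (Finset.subset_univ W)
    omega
  have hmemR : ∀ x : V, x ∈ R ↔ (x ≠ u ∧ x ≠ v ∧ x ∉ S ∧ x ∉ T) := by
    intro x
    simp only [hRdef, hWdef, Finset.mem_sdiff, Finset.mem_univ, true_and,
      Finset.mem_insert, Finset.mem_union]
    push_neg
    tauto
  have hNu : G.neighborFinset u = insert v S := (Finset.insert_erase hvNu).symm
  have hNv : G.neighborFinset v = insert u T := (Finset.insert_erase huNv).symm
  have hellu : ∀ c : V → Bool,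
      ((G.neighborFinset u).filter (fun y => c y = c u)).card
        = (if c v = c u then 1 else 0) + (S.filter (fun y => c y = c u)).card := by
    intro c
    rw [hNu, Finset.filter_insert]
    by_cases h : c v = c u
    · rw [if_pos h, if_pos h,
        Finset.card_insert_of_notMem (fun hc => hvS (Finset.mem_of_mem_filter _ hc))]
      omega
    · rw [if_neg h, if_neg h]
      omega
  have hellv : ∀ c : V → Bool,
      ((G.neighborFinset v).filter (fun y => c y = c v)).card
        = (if c u = c v then 1 else 0) + (T.filter (fun y => c y = c v)).card := by
    intro c
    rw [hNv, Finset.filter_insert]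
    by_cases h : c u = c v
    · rw [if_pos h, if_pos h,
        Finset.card_insert_of_notMem (fun hc => huT (Finset.mem_of_mem_filter _ hc))]
      omega
    · rw [if_neg h, if_neg h]
      omega
  simp only [hellu, hellv]
  have hbij : (∑ c : V → Bool,
      if A (c u, (if c v = c u then 1 else 0) + (S.filter (fun y => c y = c u)).card)
          ≠ A (c v, (if c u = c v then 1 else 0) + (T.filter (fun y => c y = c v)).card)
        then (1:ℝ) else 0)
      = ∑ t ∈ (Finset.univ ×ˢ Finset.univ ×ˢ S.powerset ×ˢ T.powerset ×ˢ R.powerset :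
          Finset (Bool × Bool × Finset V × Finset V × Finset V)),
        (if A (t.1, (if t.2.1 = t.1 then 1 else 0) + t.2.2.1.card)
            ≠ A (t.2.1, (if t.1 = t.2.1 then 1 else 0) + t.2.2.2.1.card)
          then (1:ℝ) else 0) := by
    refine Finset.sum_nbij'
      (fun c => (c u, c v, S.filter (fun y => c y = c u), T.filter (fun y => c y = c v),
        R.filter (fun y => c y = true)))
      (fun t x => if x = u then t.1 else if x = v then t.2.1
        else if x ∈ S then (if x ∈ t.2.2.1 then t.1 else !t.1)
        else if x ∈ T then (if x ∈ t.2.2.2.1 then t.2.1 else !t.2.1)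
        else decide (x ∈ t.2.2.2.2)) ?_ ?_ ?_ ?_ ?_
    · intro c _
      simp only [Finset.mem_product, Finset.mem_univ, Finset.mem_powerset, true_and]
      exact ⟨Finset.filter_subset _ _, Finset.filter_subset _ _, Finset.filter_subset _ _⟩
    · intro t _
      exact Finset.mem_univ _
    · intro c _
      funext x
      by_cases hxu : x = u
      · subst hxu; simp
      · by_cases hxv : x = v
        · subst hxv; simp [hxu]
        · by_cases hxS : x ∈ S
          · simp only [if_neg hxu, if_neg hxv, if_pos hxS, Finset.mem_filter]
            by_cases hcx : c x = c u
            · simp [hxS, hcx]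
            · simp only [hxS, hcx, and_false, if_neg, not_false_eq_true, true_and]
              cases hx : c x <;> cases hu : c u <;> simp_all
          · by_cases hxT : x ∈ T
            · simp only [if_neg hxu, if_neg hxv, if_neg hxS, if_pos hxT, Finset.mem_filter]
              by_cases hcx : c x = c v
              · simp [hxT, hcx]
              · simp only [hxT, hcx, and_false, if_neg, not_false_eq_true, true_and]
                cases hx : c x <;> cases hv : c v <;> simp_all
            · have hxR : x ∈ R := (hmemR x).mpr ⟨hxu, hxv, hxS, hxT⟩
              simp [if_neg hxu, if_neg hxv, if_neg hxS, if_neg hxT, hxR]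
    · rintro ⟨k1, k2, X, Y, Z⟩ ht
      simp only [Finset.mem_product, Finset.mem_univ, Finset.mem_powerset, true_and] at ht
      obtain ⟨hX, hY, hZ⟩ := ht
      have e_u : (if u = u then k1 else if u = v then k2
          else if u ∈ S then (if u ∈ X then k1 else !k1)
          else if u ∈ T then (if u ∈ Y then k2 else !k2)
          else decide (u ∈ Z)) = k1 := if_pos rfl
      have e_v : (if v = u then k1 else if v = v then k2
          else if v ∈ S then (if v ∈ X then k1 else !k1)
          else if v ∈ T then (if v ∈ Y then k2 else !k2)
          else decide (v ∈ Z)) = k2 := by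
        rw [if_neg (Ne.symm huv), if_pos rfl]
      have e_y : ∀ y, y ≠ u → y ≠ v →
          (if y = u then k1 else if y = v then k2
            else if y ∈ S then (if y ∈ X then k1 else !k1)
            else if y ∈ T then (if y ∈ Y then k2 else !k2)
            else decide (y ∈ Z))
          = (if y ∈ S then (if y ∈ X then k1 else !k1)
            else if y ∈ T then (if y ∈ Y then k2 else !k2)
            else decide (y ∈ Z)) := by
        intro y h1 h2; rw [if_neg h1, if_neg h2]
      have e_S : S.filter (fun y =>
          (if y = u then k1 else if y = v then k2
            else if y ∈ S then (if y ∈ X then k1 else !k1)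
            else if y ∈ T then (if y ∈ Y then k2 else !k2)
            else decide (y ∈ Z)) = k1) = X := by
        ext y
        simp only [Finset.mem_filter]
        constructor
        · rintro ⟨hyS, hy⟩
          have hyu : y ≠ u := fun h => huS (h ▸ hyS)
          have hyv : y ≠ v := fun h => hvS (h ▸ hyS)
          rw [e_y y hyu hyv, if_pos hyS] at hy
          by_cases hyX : y ∈ X
          · exact hyX
          · rw [if_neg hyX] at hy
            exact absurd hy (by cases k1 <;> simp)
        · intro hyX
          have hyS : y ∈ S := hX hyX
          have hyu : y ≠ u := fun h => huS (h ▸ hyS)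
          have hyv : y ≠ v := fun h => hvS (h ▸ hyS)
          exact ⟨hyS, by rw [e_y y hyu hyv, if_pos hyS, if_pos hyX]⟩
      have e_T : T.filter (fun y =>
          (if y = u then k1 else if y = v then k2
            else if y ∈ S then (if y ∈ X then k1 else !k1)
            else if y ∈ T then (if y ∈ Y then k2 else !k2)
            else decide (y ∈ Z)) = k2) = Y := by
        ext y
        simp only [Finset.mem_filter]
        constructor
        · rintro ⟨hyT, hy⟩
          have hyu : y ≠ u := fun h => huT (h ▸ hyT)
          have hyv : y ≠ v := fun h => hvT (h ▸ hyT)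
          have hyS : y ∉ S := fun h => (Finset.disjoint_left.mp hdisj h) hyT
          rw [e_y y hyu hyv, if_neg hyS, if_pos hyT] at hy
          by_cases hyY : y ∈ Y
          · exact hyY
          · rw [if_neg hyY] at hy
            exact absurd hy (by cases k2 <;> simp)
        · intro hyY
          have hyT : y ∈ T := hY hyY
          have hyu : y ≠ u := fun h => huT (h ▸ hyT)
          have hyv : y ≠ v := fun h => hvT (h ▸ hyT)
          have hyS : y ∉ S := fun h => (Finset.disjoint_left.mp hdisj h) hyT
          exact ⟨hyT, by rw [e_y y hyu hyv, if_neg hyS, if_pos hyT, if_pos hyY]⟩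
      have e_R : R.filter (fun y =>
          (if y = u then k1 else if y = v then k2
            else if y ∈ S then (if y ∈ X then k1 else !k1)
            else if y ∈ T then (if y ∈ Y then k2 else !k2)
            else decide (y ∈ Z)) = true) = Z := by
        ext y
        simp only [Finset.mem_filter]
        constructor
        · rintro ⟨hyR, hy⟩
          obtain ⟨hyu, hyv, hyS, hyT⟩ := (hmemR y).mp hyR
          rw [e_y y hyu hyv, if_neg hyS, if_neg hyT] at hy
          simpa using hy
        · intro hyZ
          have hyR : y ∈ R := hZ hyZ
          obtain ⟨hyu, hyv, hyS, hyT⟩ := (hmemR y).mp hyR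
          refine ⟨hyR, ?_⟩
          rw [e_y y hyu hyv, if_neg hyS, if_neg hyT]
          simpa using hyZ
      have e_S' : S.filter (fun y =>
          (if y = u then k1 else if y = v then k2
            else if y ∈ S then (if y ∈ X then k1 else !k1)
            else if y ∈ T then (if y ∈ Y then k2 else !k2)
            else decide (y ∈ Z))
          = (if u = u then k1 else if u = v then k2
            else if u ∈ S then (if u ∈ X then k1 else !k1)
            else if u ∈ T then (if u ∈ Y then k2 else !k2)
            else decide (u ∈ Z))) = X := by rw [e_u]; exact e_S
      have e_T' : T.filter (fun y =>
          (if y = u then k1 else if y = v then k2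
            else if y ∈ S then (if y ∈ X then k1 else !k1)
            else if y ∈ T then (if y ∈ Y then k2 else !k2)
            else decide (y ∈ Z))
          = (if v = u then k1 else if v = v then k2
            else if v ∈ S then (if v ∈ X then k1 else !k1)
            else if v ∈ T then (if v ∈ Y then k2 else !k2)
            else decide (v ∈ Z))) = Y := by rw [e_v]; exact e_T
      exact Prod.ext e_u (Prod.ext e_v (Prod.ext e_S' (Prod.ext e_T' e_R)))
    · intro c _
      rfl
  rw [hbij]
  simp only [Finset.sum_product]
  rw [cutWeightN_eq d hd A, Finset.mul_sum]
  refine Finset.sum_congr rfl fun k1 _ => ?_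
  rw [Finset.mul_sum]
  refine Finset.sum_congr rfl fun k2 _ => ?_
  have hZsum : ∀ (r : ℝ), (∑ _Z ∈ R.powerset, r) = (2:ℝ) ^ R.card * r := by
    intro r
    rw [Finset.sum_const, Finset.card_powerset, nsmul_eq_mul]
    push_cast
    ring
  have hSd : S.card + 1 = d := by omega
  have hTd : T.card + 1 = d := by omega
  calc (∑ X ∈ S.powerset, ∑ Y ∈ T.powerset, ∑ _Z ∈ R.powerset,
        (if A (k1, (if k2 = k1 then 1 else 0) + X.card)
            ≠ A (k2, (if k1 = k2 then 1 else 0) + Y.card) then (1:ℝ) else 0))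
      = ∑ X ∈ S.powerset, ∑ Y ∈ T.powerset, (2:ℝ) ^ R.card *
          (if A (k1, (if k2 = k1 then 1 else 0) + X.card)
            ≠ A (k2, (if k1 = k2 then 1 else 0) + Y.card) then (1:ℝ) else 0) :=
        Finset.sum_congr rfl (fun X _ => Finset.sum_congr rfl fun Y _ => hZsum _)
    _ = ∑ j1 ∈ Finset.range (S.card + 1), (S.card.choose j1 : ℝ) *
          ∑ Y ∈ T.powerset, ((2:ℝ) ^ R.card *
            (if A (k1, (if k2 = k1 then 1 else 0) + j1)
              ≠ A (k2, (if k1 = k2 then 1 else 0) + Y.card) then (1:ℝ) else 0)) :=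
        sum_powerset_card_aux S (fun j1 => ∑ Y ∈ T.powerset, ((2:ℝ) ^ R.card *
            (if A (k1, (if k2 = k1 then 1 else 0) + j1)
              ≠ A (k2, (if k1 = k2 then 1 else 0) + Y.card) then (1:ℝ) else 0)))
    _ = ∑ j1 ∈ Finset.range (S.card + 1), (S.card.choose j1 : ℝ) *
          ∑ j2 ∈ Finset.range (T.card + 1), (T.card.choose j2 : ℝ) *
            ((2:ℝ) ^ R.card *
              (if A (k1, (if k2 = k1 then 1 else 0) + j1)
                ≠ A (k2, (if k1 = k2 then 1 else 0) + j2) then (1:ℝ) else 0)) :=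
        Finset.sum_congr rfl fun j1 _ => congrArg (fun z => (S.card.choose j1 : ℝ) * z)
          (sum_powerset_card_aux T (fun j2 => (2:ℝ) ^ R.card *
            (if A (k1, (if k2 = k1 then 1 else 0) + j1)
              ≠ A (k2, (if k1 = k2 then 1 else 0) + j2) then (1:ℝ) else 0)))
    _ = ∑ j1 ∈ Finset.range d, ((d-1).choose j1 : ℝ) *
          ∑ j2 ∈ Finset.range d, ((d-1).choose j2 : ℝ) *
            ((2:ℝ) ^ R.card *
              (if A (k1, (if k2 = k1 then 1 else 0) + j1)
                ≠ A (k2, (if k1 = k2 then 1 else 0) + j2) then (1:ℝ) else 0)) := by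
        rw [hSd, hTd, hScard, hTcard]
    _ = 2 ^ Fintype.card V *
          ∑ j1 ∈ Finset.range d, ∑ j2 ∈ Finset.range d,
            ((((d-1).choose j1 : ℝ) * ((d-1).choose j2)) / 4 ^ d) *
              (if A (k1, (if k2 = k1 then 1 else 0) + j1)
                ≠ A (k2, (if k1 = k2 then 1 else 0) + j2) then 1 else 0) := by
        rw [Finset.mul_sum]
        refine Finset.sum_congr rfl fun j1 _ => ?_
        rw [Finset.mul_sum, Finset.mul_sum]
        refine Finset.sum_congr rfl fun j2 _ => ?_
        have h4 : (4:ℝ) ^ d = 2 ^ (2*d) := by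
          rw [show (4:ℝ) = 2^2 by norm_num, ← pow_mul]
        have h2d : (2:ℝ) ^ (2*d) ≠ 0 := by positivity
        rw [hVcard, h4, pow_add]
        field_simp

theorem stmt1 {V : Type*} [Fintype V] [DecidableEq V]
    (d : ℕ) (hd : 1 ≤ d) (A : Bool × ℕ → Bool)
    (G : SimpleGraph V) [DecidableRel G.Adj]
    (hreg : G.IsRegularOfDegree d) (htf : G.CliqueFree 3) :
    (∑ c : V → Bool,
      ((G.edgeFinset.filter (fun e =>
        ¬ (e.map (fun x =>
          A (c x, ((G.neighborFinset x).filter (fun y => c y = c x)).card))).IsDiag)).card : ℝ))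
      / 2 ^ (Fintype.card V)
    = G.edgeFinset.card * cutWeightN d A := by
  classical
  have h2 : (2:ℝ) ^ (Fintype.card V) ≠ 0 := by positivity
  rw [div_eq_iff h2]
  have hcard : ∀ c : V → Bool,
      ((G.edgeFinset.filter (fun e =>
        ¬ (e.map (fun x =>
          A (c x, ((G.neighborFinset x).filter (fun y => c y = c x)).card))).IsDiag)).card : ℝ)
      = ∑ e ∈ G.edgeFinset,
          (if ¬ (e.map (fun x =>
            A (c x, ((G.neighborFinset x).filter (fun y => c y = c x)).card))).IsDiag
            then (1:ℝ) else 0) := by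
    intro c
    rw [Finset.card_filter]
    push_cast
    rfl
  rw [Finset.sum_congr rfl fun c _ => hcard c, Finset.sum_comm]
  have hedge : ∀ e ∈ G.edgeFinset,
      (∑ c : V → Bool, (if ¬ (e.map (fun x =>
        A (c x, ((G.neighborFinset x).filter (fun y => c y = c x)).card))).IsDiag
        then (1:ℝ) else 0))
      = 2 ^ (Fintype.card V) * cutWeightN d A := by
    intro e
    induction e using Sym2.ind with
    | _ u v =>
      intro he
      have hadj : G.Adj u v := by
        rwa [SimpleGraph.mem_edgeFinset, SimpleGraph.mem_edgeSet] at he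
      simp only [Sym2.map_pair_eq, Sym2.mk_isDiag_iff]
      exact key_edge d hd A G hreg htf u v hadj
  rw [Finset.sum_congr rfl hedge, Finset.sum_const, nsmul_eq_mul]
  ring
end

section
/- Let d ≥ 1 and τ be integers with 2τ > d, let G be a d-regular triangle-free simple graph on a finite vertex set V, and let {u,v} be an edge of G. Then the number of functions c : variable V → {a,b} for which the threshold algorithm outputs A_τ(c)(u) ≠ A_τ(c)(v), divided by 2^|V|, equals 1/2 + 4^{-(d-1)} · C(d-1, τ-1) · Σ_{i = d-τ+1}^{τ-1} C(d-1, i). -/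
open Finset

/-- The colour `A_τ(c)(v)` of a vertex `v` with `c v = a` and `ℓ_c(v) = ℓ`. -/
def thresholdUpdate (τ ℓ : ℕ) (a : Bool) : Bool := if ℓ < τ then a else !a

lemma sum_sum_ite_iff {ι R : Type*} [CommRing R] (s : Finset ι) (p : ι → Prop) [DecidablePred p]
    (f : ι → R) :
    ∑ x ∈ s, ∑ y ∈ s, (if (p x ↔ p y) then f x * f y else 0)
      = (∑ x ∈ s with p x, f x) ^ 2 + (∑ x ∈ s with ¬p x, f x) ^ 2 := by
  simp only [sq, sum_filter, sum_mul_sum, ← sum_add_distrib]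
  refine sum_congr rfl fun x _ => sum_congr rfl fun y _ => ?_
  by_cases p x <;> by_cases p y <;> simp [*]

lemma sum_sum_ite_iff_zero {ι R : Type*} [CommRing R] (s : Finset ι) (p : ι → Prop)
    [DecidablePred p] (f : ι → R) :
    ∑ x ∈ s, ∑ y ∈ s, (if (p x ↔ p y) then 0 else f x * f y)
      = 2 * (∑ x ∈ s with p x, f x) * ∑ x ∈ s with ¬p x, f x := by
  rw [mul_assoc, two_mul]
  nth_rewrite 2 [mul_comm]
  simp only [sum_filter, sum_mul_sum, ← sum_add_distrib]
  refine sum_congr rfl fun x _ => sum_congr rfl fun y _ => ?_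
  by_cases p x <;> by_cases p y <;> simp [*]

lemma sum_range_choose_add_sum_range_choose_sub (m k : ℕ) :
    ∑ i ∈ range k, m.choose i + ∑ i ∈ range (m + 1 - k), m.choose i = 2 ^ m := by
  rcases le_or_gt k (m + 1) with hk | hk
  · have hreflect := sum_Ico_reflect (fun i => m.choose i) k (le_refl (m + 1))
    rw [Nat.sub_self, ← range_eq_Ico] at hreflect
    rw [← Nat.sum_range_choose, ← sum_range_add_sum_Ico _ hk, ← hreflect]
    refine congrArg _ (sum_congr rfl fun i hi => Nat.choose_symm ?_)
    exact Nat.le_of_lt_succ (mem_Ico.mp hi).2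
  · rw [Nat.sub_eq_zero_of_le hk.le, range_zero, sum_empty, add_zero, ← Nat.sum_range_choose]
    exact (sum_subset (range_subset_range.mpr hk.le) fun i _ hi =>
      Nat.choose_eq_zero_of_lt (by simpa using hi)).symm

lemma sum_range_choose_filter_lt (m k : ℕ) :
    ∑ x ∈ range (m + 1) with x < k, (m.choose x : ℝ) = ∑ x ∈ range k, (m.choose x : ℝ) := by
  have hfilter : {x ∈ range (m + 1) | x < k} = {x ∈ range k | x < m + 1} := by
    ext x
    simp only [mem_filter, mem_range]
    exact and_comm
  rw [hfilter, sum_filter_of_ne fun x _ h => ?_]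
  by_contra hx
  exact h (by rw [Nat.choose_eq_zero_of_lt (by omega), Nat.cast_zero])

lemma sum_ite_thresholdUpdate_ne (m τ : ℕ) (hτ : m + 2 ≤ 2 * τ) :
    ∑ a : Bool, ∑ b : Bool, ∑ x ∈ range (m + 1), ∑ y ∈ range (m + 1),
      (if thresholdUpdate τ ((if b = a then 1 else 0) + x) a
          ≠ thresholdUpdate τ ((if a = b then 1 else 0) + y) b
        then (m.choose x * m.choose y : ℝ) else 0)
      = 2 * 4 ^ m + 4 * m.choose (τ - 1) * ∑ i ∈ Ico (m + 2 - τ) τ, (m.choose i : ℝ) := by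
  simp only [Fintype.sum_bool, thresholdUpdate]
  simp only [↓reduceIte, Bool.not_true, Bool.if_false_right, Bool.and_true, ne_eq,
    decide_eq_decide, ite_not, Bool.false_eq_true, zero_add, Bool.true_eq_false, Bool.not_false,
    Bool.if_true_right, Bool.or_false, Bool.not_eq_not, Bool.not_eq_eq_eq_not, Bool.not_not]
  rw [sum_sum_ite_iff_zero, sum_sum_ite_iff]
  set L : ℕ → ℝ := fun k => ∑ i ∈ range k, (m.choose i : ℝ) with hL
  have htotal : ∑ x ∈ range (m + 1), (m.choose x : ℝ) = 2 ^ m := by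
    exact_mod_cast Nat.sum_range_choose m
  have hA1 : ∑ x ∈ range (m + 1) with 1 + x < τ, (m.choose x : ℝ) = L (τ - 1) := by
    rw [filter_congr fun x _ => show 1 + x < τ ↔ x < τ - 1 by omega, sum_range_choose_filter_lt]
  have hA0 : ∑ x ∈ range (m + 1) with x < τ, (m.choose x : ℝ) = L τ :=
    sum_range_choose_filter_lt m τ
  have hB1 : ∑ x ∈ range (m + 1) with ¬(1 + x < τ), (m.choose x : ℝ) = 2 ^ m - L (τ - 1) := by
    rw [← hA1, ← htotal, eq_sub_iff_add_eq', sum_filter_add_sum_filter_not]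
  have hB0 : ∑ x ∈ range (m + 1) with ¬(x < τ), (m.choose x : ℝ) = 2 ^ m - L τ := by
    rw [← hA0, ← htotal, eq_sub_iff_add_eq', sum_filter_add_sum_filter_not]
  have hstep : L τ = L (τ - 1) + m.choose (τ - 1) := by
    simp only [hL]
    rw [← sum_range_succ, Nat.sub_add_cancel (by omega)]
  have hsymm : L (τ - 1) + L (m + 2 - τ) = 2 ^ m := by
    have := sum_range_choose_add_sum_range_choose_sub m (τ - 1)
    rw [show m + 1 - (τ - 1) = m + 2 - τ by omega] at this
    simp only [hL]
    exact_mod_cast this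
  have hIco : L τ = L (m + 2 - τ) + ∑ i ∈ Ico (m + 2 - τ) τ, (m.choose i : ℝ) :=
    (sum_range_add_sum_Ico _ (by omega)).symm
  -- the sum is now `4 L(τ-1) (2^m - L(τ-1)) + 2 (L(τ)^2 + (2^m - L(τ))^2)`
  rw [hA1, hA0, hB1, hB0, show (4 : ℝ) ^ m = 2 ^ m * 2 ^ m by rw [← mul_pow]; norm_num]
  linear_combination (4 * (L τ + L (τ - 1) - 2 ^ m)) * hstep + 4 * (m.choose (τ - 1) : ℝ) * hIco
    + 4 * (m.choose (τ - 1) : ℝ) * hsymm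

lemma DependsOn.and {ι : Type*} {β : ι → Type*} {P Q : (Π i, β i) → Prop} {s t : Set ι}
    (hP : DependsOn P s) (hQ : DependsOn Q t) : DependsOn (fun x => P x ∧ Q x) (s ∪ t) :=
  fun _ _ h => congrArg₂ And (hP fun i hi => h i (Or.inl hi)) (hQ fun i hi => h i (Or.inr hi))

lemma dependsOn_apply_eq {α : Type*} (w : α) (b : Bool) :
    DependsOn (fun c : α → Bool => c w = b) ({w} : Finset α) := fun c c' h => by
  dsimp only
  rw [h w (mem_singleton_self w)]

lemma dependsOn_card_filter_eq {α : Type*} (S : Finset α) (b : Bool) (k : ℕ) :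
    DependsOn (fun c : α → Bool => #{w ∈ S | c w = b} = k) S := fun c c' h => by
  dsimp only
  rw [filter_congr fun w hw => by rw [h w hw]]

section Coloring

variable {α : Type*} [Fintype α] [DecidableEq α]

noncomputable def coloringProb (P : (α → Bool) → Prop) [DecidablePred P] : ℝ :=
  #{c | P c} / 2 ^ Fintype.card α

lemma coloringProb_congr {P Q : (α → Bool) → Prop} [DecidablePred P] [DecidablePred Q]
    (h : ∀ c, P c ↔ Q c) : coloringProb P = coloringProb Q := by
  obtain rfl : P = Q := funext fun c => propext (h c)
  congr

lemma coloringProb_and {S T : Finset α} (hST : Disjoint S T)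
    {P Q : (α → Bool) → Prop} [DecidablePred P] [DecidablePred Q]
    (hP : DependsOn P S) (hQ : DependsOn Q T) :
    coloringProb (fun c => P c ∧ Q c) = coloringProb P * coloringProb Q := by
  -- exchanging two colourings outside `S` matches pairs with `P c ∧ Q c` to pairs with `P c ∧ Q c'`
  let swap (p : (α → Bool) × (α → Bool)) := (S.piecewise p.1 p.2, S.piecewise p.2 p.1)
  have hswap : ∀ p, swap (swap p) = p := fun p => by
    simp [swap, piecewise_idem_left, piecewise_idem_right, piecewise_same]
  have hPS : ∀ c c', P (S.piecewise c c') = P c := fun c c' =>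
    hP fun i hi => piecewise_eq_of_mem _ _ _ hi
  have hQS : ∀ c c', Q (S.piecewise c' c) = Q c := fun c c' =>
    hQ fun i hi => piecewise_eq_of_notMem _ _ _ (disjoint_right.mp hST hi)
  have hcard : #(({c | P c ∧ Q c} : Finset _) ×ˢ (univ : Finset (α → Bool)))
      = #(({c | P c} : Finset _) ×ˢ ({c | Q c} : Finset _)) := by
    refine card_nbij' swap swap ?_ ?_ (fun p _ => hswap p) (fun p _ => hswap p)
    · rintro ⟨c, c'⟩ h
      simp_all [swap]
    · rintro ⟨c, c'⟩ h
      simp_all [swap]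
  simp only [card_product, card_univ, Fintype.card_fun, Fintype.card_bool] at hcard
  unfold coloringProb
  field_simp
  exact_mod_cast hcard

lemma coloringProb_forall_mem_eq (S : Finset α) (p : α → Bool) :
    coloringProb (fun c => ∀ w ∈ S, c w = p w) = (2 ^ #S)⁻¹ := by
  have hpi : ({c | ∀ w ∈ S, c w = p w} : Finset (α → Bool))
      = Fintype.piFinset fun w => if w ∈ S then {p w} else univ := by
    ext c
    simp only [mem_filter, mem_univ, true_and, Fintype.mem_piFinset]
    refine forall_congr' fun w => ?_
    split_ifs with hw <;> simp [hw]
  have hcard : #({c | ∀ w ∈ S, c w = p w} : Finset (α → Bool)) = 2 ^ #Sᶜ := by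
    rw [hpi, Fintype.card_piFinset]
    simp [apply_ite card, prod_ite, ← compl_filter]
  unfold coloringProb
  rw [hcard, ← S.card_compl_add_card, pow_add]
  push_cast
  field_simp

lemma coloringProb_apply_eq (w : α) (b : Bool) : coloringProb (fun c => c w = b) = 1 / 2 := by
  simpa using coloringProb_forall_mem_eq {w} fun _ => b

lemma coloringProb_comp_eq_sum {β : Type*} [DecidableEq β] (Φ : (α → Bool) → β) (T : Finset β)
    (hΦ : ∀ c, Φ c ∈ T) (F : β → Prop) [DecidablePred F] :
    coloringProb (fun c => F (Φ c)) = ∑ t ∈ T with F t, coloringProb (fun c => Φ c = t) := by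
  have hmaps : ∀ c ∈ ({c | F (Φ c)} : Finset (α → Bool)), Φ c ∈ ({t ∈ T | F t} : Finset β) := by
    intro c hc
    simp_all
  unfold coloringProb
  rw [← sum_div, card_eq_sum_card_fiberwise hmaps]
  push_cast
  congr 1
  refine sum_congr rfl fun t ht => ?_
  rw [filter_filter]
  congr 2
  ext c
  simp only [mem_filter, mem_univ, true_and]
  exact ⟨And.right, fun h => ⟨h ▸ (mem_filter.mp ht).2, h⟩⟩

lemma coloringProb_card_filter_eq (S : Finset α) (b : Bool) (k : ℕ) :
    coloringProb (fun c => #{w ∈ S | c w = b} = k) = (#S).choose k / 2 ^ #S := by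
  rw [coloringProb_comp_eq_sum (fun c => {w ∈ S | c w = b}) S.powerset (fun c => by simp)
    (fun A => #A = k), ← powersetCard_eq_filter]
  have hfiber : ∀ A ∈ S.powersetCard k,
      coloringProb (fun c => {w ∈ S | c w = b} = A) = (2 ^ #S)⁻¹ := by
    intro A hA
    rw [← coloringProb_forall_mem_eq S fun w => if w ∈ A then b else !b]
    have hAS := (mem_powersetCard.mp hA).1
    refine coloringProb_congr fun c => ?_
    have hbool : ∀ w, (c w = if w ∈ A then b else !b) ↔ (c w = b ↔ w ∈ A) := fun w => by
      by_cases w ∈ A <;> cases b <;> cases c w <;> simp [*]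
    simp only [hbool, Finset.ext_iff, mem_filter]
    exact ⟨fun h w hw => by simp [← h, hw], fun h w => by grind⟩
  rw [sum_congr rfl hfiber, sum_const, card_powersetCard, nsmul_eq_mul, div_eq_mul_inv]

lemma coloringProb_fiber {u v : α} {S T : Finset α} (huv : u ≠ v) (hu : u ∉ S ∪ T)
    (hv : v ∉ S ∪ T) (hST : Disjoint S T) (a b : Bool) (x y : ℕ) :
    coloringProb (fun c => c u = a ∧ c v = b ∧ #{w ∈ S | c w = a} = x ∧ #{w ∈ T | c w = b} = y)
      = (#S).choose x * (#T).choose y / 2 ^ (#S + #T + 2) := by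
  have hcounts := (dependsOn_card_filter_eq S a x).and (dependsOn_card_filter_eq T b y)
  have hv_counts := (dependsOn_apply_eq v b).and hcounts
  rw [← coe_union] at hcounts
  rw [← coe_union, ← coe_union] at hv_counts
  rw [coloringProb_and (disjoint_singleton_left.mpr (by simp [huv, hu])) (dependsOn_apply_eq u a)
      hv_counts,
    coloringProb_and (disjoint_singleton_left.mpr hv) (dependsOn_apply_eq v b) hcounts,
    coloringProb_and hST (dependsOn_card_filter_eq S a x) (dependsOn_card_filter_eq T b y),
    coloringProb_apply_eq, coloringProb_apply_eq, coloringProb_card_filter_eq,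
    coloringProb_card_filter_eq]
  field_simp
  ring

lemma coloringProb_thresholdUpdate_ne {u v : α} {S T : Finset α} (huv : u ≠ v) (hu : u ∉ S ∪ T)
    (hv : v ∉ S ∪ T) (hST : Disjoint S T) (hTS : #T = #S) {τ : ℕ} (hτ : #S + 2 ≤ 2 * τ) :
    coloringProb (fun c =>
        thresholdUpdate τ ((if c v = c u then 1 else 0) + #{w ∈ S | c w = c u}) (c u)
          ≠ thresholdUpdate τ ((if c u = c v then 1 else 0) + #{w ∈ T | c w = c v}) (c v))
      = 1 / 2 + (#S).choose (τ - 1) / 4 ^ #S * ∑ i ∈ Ico (#S + 2 - τ) τ, ((#S).choose i : ℝ) := by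
  have hΦ : ∀ c : α → Bool, (c u, c v, #{w ∈ S | c w = c u}, #{w ∈ T | c w = c v})
      ∈ (univ ×ˢ univ ×ˢ range (#S + 1) ×ˢ range (#S + 1) : Finset (Bool × Bool × ℕ × ℕ)) := by
    intro c
    simp only [mem_product, mem_univ, mem_range, Nat.lt_succ_iff, true_and]
    exact ⟨card_filter_le _ _, hTS ▸ card_filter_le _ _⟩
  have hfiber : ∀ t : Bool × Bool × ℕ × ℕ, coloringProb (fun c =>
      (c u, c v, #{w ∈ S | c w = c u}, #{w ∈ T | c w = c v}) = t)
        = (#S).choose t.2.2.1 * (#S).choose t.2.2.2 * (2 ^ (2 * #S + 2))⁻¹ := by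
    rintro ⟨a, b, x, y⟩
    convert coloringProb_fiber huv hu hv hST a b x y using 1
    · refine coloringProb_congr fun c => ?_
      simp only [Prod.mk.injEq]
      constructor <;> rintro ⟨rfl, rfl, hx, hy⟩ <;> exact ⟨rfl, rfl, hx, hy⟩
    · rw [hTS, two_mul, div_eq_mul_inv]
  rw [coloringProb_comp_eq_sum _ _ hΦ (fun t => thresholdUpdate τ ((if t.2.1 = t.1 then 1 else 0)
    + t.2.2.1) t.1 ≠ thresholdUpdate τ ((if t.1 = t.2.1 then 1 else 0) + t.2.2.2) t.2.1),
    sum_congr rfl fun t _ => hfiber t, ← sum_mul, sum_filter]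
  simp only [sum_product]
  rw [sum_ite_thresholdUpdate_ne _ τ hτ, pow_add, pow_mul]
  field_simp
  ring

end Coloring

lemma card_filter_eq_ite_add_card_filter_erase {α : Type*} [DecidableEq α] {s : Finset α} {a : α}
    (ha : a ∈ s) (p : α → Prop) [DecidablePred p] :
    #{x ∈ s | p x} = (if p a then 1 else 0) + #{x ∈ s.erase a | p x} := by
  simp only [card_filter]
  exact (add_sum_erase s _ ha).symm

lemma chooseZ_natCast (n k : ℕ) : chooseZ n k = n.choose k := by
  simp [chooseZ]

lemma sum_Icc_chooseZ (n : ℕ) (a : ℤ) (b : ℕ) :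
    ∑ i ∈ Icc a (b : ℤ), chooseZ n i = ∑ i ∈ Ico a.toNat (b + 1), n.choose i := by
  rw [← sum_filter_of_ne (p := fun i => 0 ≤ i) fun i _ h => by
    by_contra hi
    simp [chooseZ, hi] at h]
  refine sum_nbij' Int.toNat (↑) ?_ ?_ ?_ ?_ ?_ <;> intro i hi <;> simp_all [chooseZ]

lemma SimpleGraph.disjoint_neighborFinset_of_cliqueFree_three {V : Type*} {G : SimpleGraph V}
    [Fintype V] [DecidableRel G.Adj] [DecidableEq V] (htf : G.CliqueFree 3) {u v : V}
    (huv : G.Adj u v) : Disjoint (G.neighborFinset u) (G.neighborFinset v) := by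
  rw [Finset.disjoint_left]
  intro w hu hv
  rw [mem_neighborFinset] at hu hv
  exact htf {u, v, w} (is3Clique_triple_iff.mpr ⟨huv, hu, hv⟩)

theorem stmt2_general {V : Type*} [Fintype V] [DecidableEq V]
    (d τ : ℕ) (hτ : d < 2 * τ)
    (G : SimpleGraph V) [DecidableRel G.Adj]
    (hreg : G.IsRegularOfDegree d) (htf : G.CliqueFree 3)
    (u v : V) (huv : G.Adj u v) :
    ((Finset.univ.filter (fun c : V → Bool =>
        (if ((G.neighborFinset u).filter (fun y => c y = c u)).card < τ then c u else !(c u))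
        ≠ (if ((G.neighborFinset v).filter (fun y => c y = c v)).card < τ then c v else !(c v)))).card : ℝ)
      / 2 ^ (Fintype.card V)
    = 1/2 + (chooseZ (d-1) ((τ : ℤ) - 1) : ℝ) / 4 ^ (d-1)
        * ∑ i ∈ Finset.Icc ((d : ℤ) - τ + 1) ((τ : ℤ) - 1), (chooseZ (d-1) i : ℝ) := by
  set U := (G.neighborFinset u).erase v
  set W := (G.neighborFinset v).erase u
  have hvu : v ∈ G.neighborFinset u := (G.mem_neighborFinset u v).mpr huv
  have huv' : u ∈ G.neighborFinset v := (G.mem_neighborFinset v u).mpr huv.symm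
  obtain rfl : #U + 1 = d := by
    rw [card_erase_add_one hvu, G.card_neighborFinset_eq_degree, hreg u]
  have hW : #W = #U := by
    rw [← Nat.add_right_cancel_iff, card_erase_add_one huv', G.card_neighborFinset_eq_degree,
      hreg v]
  have hUW : Disjoint U W := (G.disjoint_neighborFinset_of_cliqueFree_three htf huv).mono
    (erase_subset _ _) (erase_subset _ _)
  have hu : u ∉ U ∪ W := by simp [U, W]
  have hv : v ∉ U ∪ W := by simp [U, W]
  simp only [card_filter_eq_ite_add_card_filter_erase hvu,
    card_filter_eq_ite_add_card_filter_erase huv']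
  refine (coloringProb_thresholdUpdate_ne huv.ne hu hv hUW hW (by omega)).trans ?_
  rw [Nat.add_sub_cancel, show (τ : ℤ) - 1 = ((τ - 1 : ℕ) : ℤ) by omega, chooseZ_natCast]
  have hIcc := sum_Icc_chooseZ (#U) ((#U + 1 : ℕ) - τ + 1) (τ - 1)
  rw [Nat.sub_add_cancel (by omega), show ((#U + 1 : ℕ) - τ + 1 : ℤ).toNat = #U + 2 - τ by omega]
    at hIcc
  congr 2
  exact_mod_cast hIcc.symm

theorem stmt2 {V : Type*} [Fintype V] [DecidableEq V]
    (d τ : ℕ) (hd : 1 ≤ d) (hτ : d < 2 * τ)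
    (G : SimpleGraph V) [DecidableRel G.Adj]
    (hreg : G.IsRegularOfDegree d) (htf : G.CliqueFree 3)
    (u v : V) (huv : G.Adj u v) :
    ((Finset.univ.filter (fun c : V → Bool =>
        (if ((G.neighborFinset u).filter (fun y => c y = c u)).card < τ then c u else !(c u))
        ≠ (if ((G.neighborFinset v).filter (fun y => c y = c v)).card < τ then c v else !(c v)))).card : ℝ)
      / 2 ^ (Fintype.card V)
    = 1/2 + (chooseZ (d-1) ((τ : ℤ) - 1) : ℝ) / 4 ^ (d-1)
        * ∑ i ∈ Finset.Icc ((d : ℤ) - τ + 1) ((τ : ℤ) - 1), (chooseZ (d-1) i : ℝ) :=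
  stmt2_general d τ hτ G hreg htf u v huv
end

section
/- For every integer n ≥ 1500, one has 0.999/√(π·n) < 4^{-n} · C(2n, n) < 1/√(π·n). -/
/-!
With the Stirling sequence `s k = k! / (√(2k) (k/e)^k)` one has
`C(2n, n) / 4^n = s(2n) / (s(n)^2 √n)`. The sequence `s` decreases strictly to `√π`, and Robbins'
bound `log s(k) - log s(k+1) ≤ 1 / (12 k (k+1))` telescopes to `s(n) ≤ √π e^{1/(12n)}`. Hence
`e^{-1/(6n)} / √(πn) ≤ C(2n, n) / 4^n < 1 / √(πn)`, and `e^{-1/(6n)} ≥ 1 - 1/(6n) > 0.999`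
for `n ≥ 1500`.
-/

open Real Filter Topology Nat

namespace Stirling

theorem stirlingSeq'_strictAnti : StrictAnti (stirlingSeq ∘ succ) :=
  strictAnti_nat_of_succ_lt fun n => by
    have hlog : log (stirlingSeq (n + 2)) < log (stirlingSeq (n + 1)) :=
      sub_pos.mp <| hasSum_lt (f := 0) (i := 0) (fun _ => by positivity) (by positivity)
        hasSum_zero (log_stirlingSeq_sdiff_hasSum n)
    exact (log_lt_log_iff (stirlingSeq'_pos _) (stirlingSeq'_pos _)).mp hlog

theorem stirlingSeq_lt_stirlingSeq {m n : ℕ} (hm : m ≠ 0) (hmn : m < n) :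
    stirlingSeq n < stirlingSeq m := by
  obtain ⟨k, rfl⟩ := exists_eq_succ_of_ne_zero hm
  obtain ⟨l, rfl⟩ := Nat.exists_eq_add_of_lt hmn
  exact stirlingSeq'_strictAnti (show k < k + 1 + l by omega)

theorem log_stirlingSeq_le_log_stirlingSeq_add {n : ℕ} (hn : n ≠ 0) (m : ℕ) :
    log (stirlingSeq n) ≤ log (stirlingSeq (n + m)) + 1 / (12 * n) - 1 / (12 * (n + m)) := by
  induction m with
  | zero => simp
  | succ m ih =>
    have hstep := log_stirlingSeq_sdiff_le (n + m)
    have htelescope :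
        1 / (12 * (n + m : ℝ) * (n + m + 1)) = 1 / (12 * (n + m : ℝ)) - 1 / (12 * (n + m + 1)) := by
      have : (0 : ℝ) < n + m := by positivity
      field
    push_cast at hstep ⊢
    rw [← add_assoc, ← add_assoc]
    linarith

theorem stirlingSeq_le_sqrt_pi_mul_exp {n : ℕ} (hn : n ≠ 0) :
    stirlingSeq n ≤ √π * exp (1 / (12 * n)) := by
  have hlim : Tendsto (fun m => log (stirlingSeq (n + m)) + 1 / (12 * n)) atTop
      (𝓝 (log √π + 1 / (12 * n))) :=
    (((continuousAt_log (by positivity)).tendsto.comp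
      (tendsto_stirlingSeq_sqrt_pi.comp (tendsto_add_atTop_nat n))).add_const _).congr
      fun m => by simp [add_comm n m]
  have hlog : log (stirlingSeq n) ≤ log √π + 1 / (12 * n) :=
    ge_of_tendsto hlim <| Eventually.of_forall fun m => by
      have := log_stirlingSeq_le_log_stirlingSeq_add hn m
      have : 0 ≤ 1 / (12 * (n + m : ℝ)) := by positivity
      linarith
  calc stirlingSeq n = exp (log (stirlingSeq n)) :=
        (exp_log (sqrt_pi_le_stirlingSeq hn |>.trans_lt' (by positivity))).symm
    _ ≤ exp (log √π + 1 / (12 * n)) := exp_le_exp.mpr hlog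
    _ = √π * exp (1 / (12 * n)) := by rw [exp_add, exp_log (by positivity)]

end Stirling

open Stirling

theorem choose_two_mul_div_four_pow_eq {n : ℕ} (hn : n ≠ 0) :
    ((2 * n).choose n : ℝ) / 4 ^ n = stirlingSeq (2 * n) / (stirlingSeq n ^ 2 * √n) := by
  have hfac : ((2 * n)! : ℝ) = (2 * n).choose n * n ! * n ! := by
    rw [two_mul]; exact_mod_cast (Nat.add_choose_mul_factorial_mul_factorial n n).symm
  have hsqrt : √(2 * (2 * n : ℕ) : ℝ) = 2 * √n := by
    rw [cast_mul, ← mul_assoc, sqrt_mul (by positivity)]; norm_num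
  have hpow : ((2 * n : ℕ) / exp 1 : ℝ) ^ (2 * n) = 4 ^ n * ((n / exp 1) ^ n) ^ 2 := by
    rw [cast_mul, mul_div_assoc, mul_pow, pow_mul, ← pow_mul _ n 2, mul_comm n 2, pow_mul]
    norm_num
  simp only [stirlingSeq, hfac, hsqrt, hpow]
  field_simp
  rw [sq_sqrt (by positivity), sq_sqrt (by positivity)]
  ring

theorem choose_two_mul_div_four_pow_lt {n : ℕ} (hn : n ≠ 0) :
    ((2 * n).choose n : ℝ) / 4 ^ n < 1 / √(π * n) := by
  have hlt : stirlingSeq (2 * n) < stirlingSeq n := stirlingSeq_lt_stirlingSeq hn (by omega)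
  have hpi : √π ≤ stirlingSeq n := sqrt_pi_le_stirlingSeq hn
  have hpos : 0 < stirlingSeq n := hpi.trans_lt' (by positivity)
  rw [choose_two_mul_div_four_pow_eq hn, sqrt_mul pi_pos.le]
  calc stirlingSeq (2 * n) / (stirlingSeq n ^ 2 * √n)
      < stirlingSeq n / (stirlingSeq n ^ 2 * √n) := by gcongr
    _ = 1 / (stirlingSeq n * √n) := by field_simp
    _ ≤ 1 / (√π * √n) := by gcongr

theorem exp_neg_div_sqrt_le_choose_two_mul_div_four_pow {n : ℕ} (hn : n ≠ 0) :
    exp (-(1 / (6 * n))) / √(π * n) ≤ ((2 * n).choose n : ℝ) / 4 ^ n := by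
  have hpi : √π ≤ stirlingSeq (2 * n) := sqrt_pi_le_stirlingSeq (by omega)
  have hle : stirlingSeq n ≤ √π * exp (1 / (12 * n)) := stirlingSeq_le_sqrt_pi_mul_exp hn
  have hpos : 0 < stirlingSeq n := (sqrt_pi_le_stirlingSeq hn).trans_lt' (by positivity)
  have hnonneg : 0 ≤ stirlingSeq (2 * n) := hpi.trans' (sqrt_nonneg π)
  rw [choose_two_mul_div_four_pow_eq hn, sqrt_mul pi_pos.le]
  calc exp (-(1 / (6 * n))) / (√π * √n)
      = √π / ((√π * exp (1 / (12 * n))) ^ 2 * √n) := by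
        rw [mul_pow, sq_sqrt pi_pos.le, ← exp_nat_mul, exp_neg]
        field_simp
        rw [sq_sqrt pi_pos.le]
        ring_nf
    _ ≤ stirlingSeq (2 * n) / (stirlingSeq n ^ 2 * √n) := by gcongr

theorem stmt6 (n : ℕ) (hn : 1500 ≤ n) :
    0.999 / Real.sqrt (Real.pi * n) < ((2 * n).choose n : ℝ) / 4 ^ n ∧
    ((2 * n).choose n : ℝ) / 4 ^ n < 1 / Real.sqrt (Real.pi * n) := by
  have hn0 : n ≠ 0 := by omega
  have hexp : (0.999 : ℝ) < exp (-(1 / (6 * n))) := by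
    have : 1 / (6 * n : ℝ) ≤ 1 / 9000 := by
      gcongr
      norm_cast
      omega
    linarith [add_one_le_exp (-(1 / (6 * n : ℝ)))]
  refine ⟨lt_of_lt_of_le ?_ (exp_neg_div_sqrt_le_choose_two_mul_div_four_pow hn0),
    choose_two_mul_div_four_pow_lt hn0⟩
  have : 0 < √(π * n) := by positivity
  gcongr
end

section
/- For every j ∈ {1, 2, 3, 4} and every integer n ≥ 1500, setting δ = ⌊j·√(n/32)⌋, one has C(2n, n+δ) > 0.995 · e^{-j²/32} · C(2n, n). -/
open Finset

/-- Key pointwise bound: for `0 ≤ x ≤ 1/3`, `exp (-(2x+3x³)) ≤ (1-x)/(1+x)`. -/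
lemma stmt7_factor (x : ℝ) (hx0 : 0 ≤ x) (hx : x ≤ 1/3) :
    Real.exp (-(2*x + 3*x^3)) ≤ (1 - x) / (1 + x) := by
  have ht0 : 0 ≤ 2*x + 3*x^3 := by positivity
  have hq := Real.quadratic_le_exp_of_nonneg ht0
  have h1x : (0:ℝ) < 1 + x := by linarith
  have hexp_pos : (0:ℝ) < Real.exp (2*x + 3*x^3) := Real.exp_pos _
  rw [Real.exp_neg, inv_eq_one_div, div_le_div_iff₀ hexp_pos h1x]
  have key : (1 + x) ≤ (1 - x) * (1 + (2*x + 3*x^3) + (2*x + 3*x^3)^2/2) := by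
    nlinarith [pow_nonneg hx0 3, mul_nonneg (pow_nonneg hx0 4) (by linarith : (0:ℝ) ≤ 1 - 3*x),
      mul_nonneg (pow_nonneg hx0 6) (by linarith : (0:ℝ) ≤ 1 - x), pow_nonneg hx0 4]
  calc (1:ℝ) * (1 + x) = 1 + x := by ring
    _ ≤ (1 - x) * (1 + (2*x + 3*x^3) + (2*x + 3*x^3)^2/2) := key
    _ ≤ (1 - x) * Real.exp (2*x + 3*x^3) := by
        apply mul_le_mul_of_nonneg_left hq (by linarith)

/-- Ratio identity for binomial coefficients around the center. -/
lemma stmt7_ratio (n : ℕ) : ∀ k : ℕ, k ≤ n →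
    ((2*n).choose (n+k) : ℝ)
      = ((2*n).choose n : ℝ) * ∏ i ∈ range k, (((n:ℝ) - i)/((n:ℝ) + i + 1)) := by
  intro k
  induction k with
  | zero => simp
  | succ k ih =>
    intro hk
    have hk' : k ≤ n := by omega
    have h := Nat.choose_succ_right_eq (2*n) (n+k)
    have h2 : 2*n - (n+k) = n - k := by omega
    rw [h2] at h
    have h' := congrArg (fun m : ℕ => (m:ℝ)) h
    push_cast [Nat.cast_sub hk'] at h'
    have hpos : (0:ℝ) < (n:ℝ) + k + 1 := by positivity
    have hidx : n+(k+1) = n+k+1 := by omega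
    have key : ((2*n).choose (n+(k+1)) : ℝ)
        = ((2*n).choose (n+k) : ℝ) * (((n:ℝ) - k)/((n:ℝ)+k+1)) := by
      rw [hidx, mul_div_assoc', eq_div_iff hpos.ne']
      linarith [h']
    rw [key, ih hk', prod_range_succ]
    ring

set_option maxHeartbeats 1000000 in
theorem stmt7 (j : ℕ) (hj : j ∈ ({1, 2, 3, 4} : Finset ℕ)) (n : ℕ) (hn : 1500 ≤ n)
    (δ : ℕ) (hδ : δ = ⌊(j : ℝ) * Real.sqrt ((n : ℝ) / 32)⌋₊) :
    ((2 * n).choose (n + δ) : ℝ)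
      > 0.995 * Real.exp (-(j : ℝ) ^ 2 / 32) * ((2 * n).choose n : ℝ) := by
  have hj4 : j ≤ 4 := by fin_cases hj <;> norm_num
  have hjR : (j:ℝ) ≤ 4 := by exact_mod_cast hj4
  have hj0 : (0:ℝ) ≤ (j:ℝ) := Nat.cast_nonneg j
  have hnR : (1500:ℝ) ≤ (n:ℝ) := by exact_mod_cast hn
  have hn0 : (0:ℝ) < (n:ℝ) := by linarith
  have hd_le : (δ:ℝ) ≤ (j:ℝ) * Real.sqrt ((n:ℝ)/32) := by
    rw [hδ]; exact Nat.floor_le (by positivity)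
  have hsq : Real.sqrt ((n:ℝ)/32) ^ 2 = (n:ℝ)/32 := Real.sq_sqrt (by positivity)
  have hd2 : (δ:ℝ)^2 ≤ (j:ℝ)^2 * (n:ℝ) / 32 := by
    have h := pow_le_pow_left₀ (Nat.cast_nonneg δ) hd_le 2
    rw [mul_pow, hsq] at h
    linarith
  have hj2 : (j:ℝ)^2 ≤ 16 := by nlinarith
  have hd2n : (δ:ℝ)^2 ≤ (n:ℝ)/2 := by nlinarith
  have hd0 : (0:ℝ) ≤ (δ:ℝ) := Nat.cast_nonneg δ
  have h3d : 3 * (δ:ℝ) ≤ (n:ℝ) := by nlinarith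
  have hdn : δ ≤ n := by
    have : (δ:ℝ) ≤ (n:ℝ) := by linarith
    exact_mod_cast this
  have hden : (0:ℝ) < 2*(n:ℝ)+1 := by linarith
  -- sum of the exponents
  have hsumsq : ∀ m : ℕ, ∑ i ∈ range m, (2*(i:ℝ)+1) = (m:ℝ)^2 := by
    intro m
    induction m with
    | zero => simp
    | succ m ih => rw [sum_range_succ, ih]; push_cast; ring
  have hS : ∑ i ∈ range δ,
      (2*((2*(i:ℝ)+1)/(2*(n:ℝ)+1)) + 3*((2*(i:ℝ)+1)/(2*(n:ℝ)+1))^3)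
        ≤ (j:ℝ)^2/32 + 1/2000 := by
    rw [sum_add_distrib]
    have h1 : ∑ i ∈ range δ, 2*((2*(i:ℝ)+1)/(2*(n:ℝ)+1)) = 2*(δ:ℝ)^2/(2*(n:ℝ)+1) := by
      calc ∑ i ∈ range δ, 2*((2*(i:ℝ)+1)/(2*(n:ℝ)+1))
          = (∑ i ∈ range δ, (2*(i:ℝ)+1)) * (2/(2*(n:ℝ)+1)) := by
            rw [sum_mul]; exact sum_congr rfl fun i _ => by ring
        _ = 2*(δ:ℝ)^2/(2*(n:ℝ)+1) := by rw [hsumsq]; ring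
    have h2 : ∑ i ∈ range δ, 3*((2*(i:ℝ)+1)/(2*(n:ℝ)+1))^3
        ≤ (δ:ℝ) * (3*((δ:ℝ)/(n:ℝ))^3) := by
      calc ∑ i ∈ range δ, 3*((2*(i:ℝ)+1)/(2*(n:ℝ)+1))^3
          ≤ ∑ i ∈ range δ, 3*((δ:ℝ)/(n:ℝ))^3 := by
            apply sum_le_sum
            intro i hi
            have hi' : i < δ := mem_range.mp hi
            have hiR : (i:ℝ) + 1 ≤ (δ:ℝ) := by exact_mod_cast hi'
            have hx0 : 0 ≤ (2*(i:ℝ)+1)/(2*(n:ℝ)+1) := by positivity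
            have hle : (2*(i:ℝ)+1)/(2*(n:ℝ)+1) ≤ (δ:ℝ)/(n:ℝ) := by
              rw [div_le_div_iff₀ hden hn0]
              nlinarith
            have := pow_le_pow_left₀ hx0 hle 3
            linarith
        _ = (δ:ℝ) * (3*((δ:ℝ)/(n:ℝ))^3) := by
            rw [sum_const, card_range, nsmul_eq_mul]
    have hA : 2*(δ:ℝ)^2/(2*(n:ℝ)+1) ≤ (j:ℝ)^2/32 := by
      rw [div_le_div_iff₀ hden (by norm_num : (0:ℝ) < 32)]
      nlinarith [hd2, sq_nonneg (j:ℝ)]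
    have hB : (δ:ℝ) * (3*((δ:ℝ)/(n:ℝ))^3) ≤ 1/2000 := by
      have hn3 : (0:ℝ) < (n:ℝ)^3 := by positivity
      have heq' : (δ:ℝ) * (3*((δ:ℝ)/(n:ℝ))^3) = 3*(δ:ℝ)^4/(n:ℝ)^3 := by
        rw [div_pow]; ring
      rw [heq', div_le_div_iff₀ hn3 (by norm_num : (0:ℝ) < 2000)]
      have e1 : (δ:ℝ)^2 * (δ:ℝ)^2 ≤ ((n:ℝ)/2) * ((n:ℝ)/2) :=
        mul_le_mul hd2n hd2n (sq_nonneg _) (by linarith)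
      have e2 : 1500 * ((n:ℝ)*(n:ℝ)) ≤ (n:ℝ) * ((n:ℝ)*(n:ℝ)) :=
        mul_le_mul_of_nonneg_right hnR (mul_nonneg hn0.le hn0.le)
      nlinarith [e1, e2]
    linarith
  set P : ℝ := ∏ i ∈ range δ, (((n:ℝ) - i)/((n:ℝ) + i + 1)) with hP
  have hratio := stmt7_ratio n δ hdn
  -- each factor bounded below by an exponential
  have hfac : ∀ i ∈ range δ,
      Real.exp (-(2*((2*(i:ℝ)+1)/(2*(n:ℝ)+1)) + 3*((2*(i:ℝ)+1)/(2*(n:ℝ)+1))^3))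
        ≤ ((n:ℝ) - i)/((n:ℝ) + i + 1) := by
    intro i hi
    have hi' : i < δ := mem_range.mp hi
    have hiR : (i:ℝ) + 1 ≤ (δ:ℝ) := by exact_mod_cast hi'
    have hx0 : 0 ≤ (2*(i:ℝ)+1)/(2*(n:ℝ)+1) := by positivity
    have hx3 : (2*(i:ℝ)+1)/(2*(n:ℝ)+1) ≤ 1/3 := by
      rw [div_le_iff₀ hden]
      nlinarith
    have h1 : (0:ℝ) < (n:ℝ) + i + 1 := by positivity
    have heq : ((n:ℝ) - i)/((n:ℝ) + i + 1)
        = (1 - (2*(i:ℝ)+1)/(2*(n:ℝ)+1))/(1 + (2*(i:ℝ)+1)/(2*(n:ℝ)+1)) := by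
      rw [div_eq_div_iff h1.ne' (by positivity : (0:ℝ) < 1 + (2*(i:ℝ)+1)/(2*(n:ℝ)+1)).ne']
      field_simp
      ring
    rw [heq]
    exact stmt7_factor _ hx0 hx3
  -- assemble
  have hPexp : Real.exp (-((j:ℝ)^2/32 + 1/2000)) ≤ P := by
    have hprod : ∏ i ∈ range δ,
        Real.exp (-(2*((2*(i:ℝ)+1)/(2*(n:ℝ)+1)) + 3*((2*(i:ℝ)+1)/(2*(n:ℝ)+1))^3))
        = Real.exp (-(∑ i ∈ range δ,
            (2*((2*(i:ℝ)+1)/(2*(n:ℝ)+1)) + 3*((2*(i:ℝ)+1)/(2*(n:ℝ)+1))^3))) := by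
      rw [← Real.exp_sum, sum_neg_distrib]
    calc Real.exp (-((j:ℝ)^2/32 + 1/2000))
        ≤ Real.exp (-(∑ i ∈ range δ,
            (2*((2*(i:ℝ)+1)/(2*(n:ℝ)+1)) + 3*((2*(i:ℝ)+1)/(2*(n:ℝ)+1))^3))) :=
          Real.exp_le_exp.mpr (by linarith)
      _ = ∏ i ∈ range δ,
            Real.exp (-(2*((2*(i:ℝ)+1)/(2*(n:ℝ)+1)) + 3*((2*(i:ℝ)+1)/(2*(n:ℝ)+1))^3)) :=
          hprod.symm
      _ ≤ P := prod_le_prod (fun i _ => (Real.exp_pos _).le) hfac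
  have hC : (0:ℝ) < ((2*n).choose n : ℝ) := by
    exact_mod_cast Nat.choose_pos (by omega : n ≤ 2*n)
  have h995 : (0.995:ℝ) < Real.exp (-(1/2000:ℝ)) := by
    have := Real.add_one_le_exp (-(1/2000:ℝ))
    linarith
  have hPbound : 0.995 * Real.exp (-(j:ℝ)^2/32) < P := by
    have hexp32 : (0:ℝ) < Real.exp (-(j:ℝ)^2/32) := Real.exp_pos _
    calc 0.995 * Real.exp (-(j:ℝ)^2/32)
        < Real.exp (-(1/2000:ℝ)) * Real.exp (-(j:ℝ)^2/32) := by
          exact mul_lt_mul_of_pos_right h995 hexp32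
      _ = Real.exp (-((j:ℝ)^2/32 + 1/2000)) := by
          rw [← Real.exp_add]; congr 1; ring
      _ ≤ P := hPexp
  rw [hratio]
  have hfin := mul_lt_mul_of_pos_left hPbound hC
  calc 0.995 * Real.exp (-(j:ℝ)^2/32) * ((2*n).choose n : ℝ)
      = ((2*n).choose n : ℝ) * (0.995 * Real.exp (-(j:ℝ)^2/32)) := by ring
    _ < ((2*n).choose n : ℝ) * P := hfin
end

section
/- For every integer n ≥ 1500, setting δ = ⌊4·√(n/32)⌋ (equivalently δ = ⌊√(n/2)⌋), one has 4^{-n} · Σ_{i = 1}^{δ} C(2n, n+i) > 0.3044. -/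
open Finset

/-- Wallis-based lower bound on the central binomial coefficient:
`π * C(2n,n)^2 * (2n+1) ≥ 2 * 16^n`. -/
lemma central_binom_lb (n : ℕ) :
    2 * 16 ^ n ≤ Real.pi * ((2 * n).choose n : ℝ) ^ 2 * (2 * n + 1) := by
  have hW := Real.Wallis.W_le n
  rw [Real.Wallis.W_eq_factorial_ratio] at hW
  have hfac : ((2 * n).choose n : ℝ) * (n.factorial : ℝ) * (n.factorial : ℝ)
      = ((2 * n).factorial : ℝ) := by
    have := Nat.choose_mul_factorial_mul_factorial (by omega : n ≤ 2 * n)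
    have h2 : 2 * n - n = n := by omega
    rw [h2] at this
    exact_mod_cast congrArg (Nat.cast : ℕ → ℝ) this
  have hfp : (0:ℝ) < (n.factorial : ℝ) := by positivity
  have h2n1 : (0:ℝ) < 2 * (n:ℝ) + 1 := by positivity
  have h16 : (2:ℝ) ^ (4 * n) = 16 ^ n := by
    rw [pow_mul]; norm_num
  rw [div_le_div_iff₀ (by positivity) (by norm_num : (0:ℝ) < 2)] at hW
  -- hW : 2^(4n) * n!^4 * 2 ≤ π * ((2n)!^2 * (2n+1))
  have key : ((2 * n).factorial : ℝ) ^ 2 = ((2 * n).choose n : ℝ) ^ 2 * (n.factorial : ℝ) ^ 4 := by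
    rw [← hfac]; ring
  rw [key] at hW
  rw [h16] at hW
  nlinarith [pow_pos hfp 4]

/-- Pointwise lower bound: `(n - i^2) * C(2n,n) ≤ n * C(2n, n+i)` for `i ≤ n`. -/
lemma choose_shift_lb (n : ℕ) : ∀ i : ℕ, i ≤ n →
    ((n:ℝ) - (i:ℝ) ^ 2) * ((2 * n).choose n : ℝ) ≤ (n:ℝ) * ((2 * n).choose (n + i) : ℝ) := by
  intro i
  induction i with
  | zero => intro _; simp
  | succ i ih =>
    intro hi
    have hi' : i ≤ n := by omega
    have IH := ih hi'
    have hid := Nat.choose_succ_right_eq (2 * n) (n + i)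
    have hsub : 2 * n - (n + i) = n - i := by omega
    rw [hsub] at hid
    have hidR : ((2 * n).choose (n + i + 1) : ℝ) * ((n:ℝ) + i + 1)
        = ((2 * n).choose (n + i) : ℝ) * ((n:ℝ) - i) := by
      have := congrArg (Nat.cast : ℕ → ℝ) hid
      push_cast [Nat.cast_sub hi'] at this
      convert this using 2 <;> push_cast <;> ring
    have hC0 : (0:ℝ) ≤ ((2 * n).choose n : ℝ) := by positivity
    have hCi : (0:ℝ) ≤ ((2 * n).choose (n + i) : ℝ) := by positivity
    have hCi1 : (0:ℝ) ≤ ((2 * n).choose (n + i + 1) : ℝ) := by positivity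
    have hni : (i:ℝ) + 1 ≤ (n:ℝ) := by exact_mod_cast hi
    have hn1 : (0:ℝ) < (n:ℝ) := by
      have : 1 ≤ n := by omega
      exact_mod_cast Nat.lt_of_lt_of_le Nat.zero_lt_one this
    have hpos : (0:ℝ) < (n:ℝ) + i + 1 := by positivity
    -- multiply things out
    have step1 : ((n:ℝ) - i) * ((n:ℝ) - (i:ℝ)^2) * ((2 * n).choose n : ℝ)
        ≤ ((n:ℝ) - i) * ((n:ℝ) * ((2 * n).choose (n + i) : ℝ)) := by
      have h := mul_le_mul_of_nonneg_left IH (show (0:ℝ) ≤ (n:ℝ) - (i:ℝ) by linarith)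
      nlinarith [h]
    have poly : ((n:ℝ) - ((i:ℝ)+1)^2) * ((n:ℝ) + i + 1)
        ≤ ((n:ℝ) - i) * ((n:ℝ) - (i:ℝ)^2) := by
      nlinarith [sq_nonneg ((i:ℝ)), sq_nonneg ((i:ℝ)+1), Nat.cast_nonneg (α := ℝ) i]
    have step2 : ((n:ℝ) - ((i:ℝ)+1)^2) * ((n:ℝ) + i + 1) * ((2 * n).choose n : ℝ)
        ≤ ((n:ℝ) - i) * ((n:ℝ) * ((2 * n).choose (n + i) : ℝ)) := by
      calc ((n:ℝ) - ((i:ℝ)+1)^2) * ((n:ℝ) + i + 1) * ((2 * n).choose n : ℝ)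
          ≤ ((n:ℝ) - i) * ((n:ℝ) - (i:ℝ)^2) * ((2 * n).choose n : ℝ) :=
            mul_le_mul_of_nonneg_right poly hC0
        _ ≤ _ := step1
    -- now use the identity; goal: (n - (i+1)^2) * C0 ≤ n * C_{i+1}
    have expand : (n:ℝ) * (((2 * n).choose (n + i + 1) : ℝ)) * ((n:ℝ) + i + 1)
        = ((n:ℝ) - i) * ((n:ℝ) * ((2 * n).choose (n + i) : ℝ)) := by
      have : (n:ℝ) * (((2 * n).choose (n + i + 1) : ℝ) * ((n:ℝ) + i + 1))
          = (n:ℝ) * (((2 * n).choose (n + i) : ℝ) * ((n:ℝ) - i)) := by rw [hidR]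
      linarith [this]
    have final : ((n:ℝ) - ((i:ℝ)+1)^2) * ((n:ℝ) + i + 1) * ((2 * n).choose n : ℝ)
        ≤ (n:ℝ) * (((2 * n).choose (n + i + 1) : ℝ)) * ((n:ℝ) + i + 1) := by
      rw [expand]; exact step2
    have := le_of_mul_le_mul_right (by
      calc ((n:ℝ) - ((i:ℝ)+1)^2) * ((2 * n).choose n : ℝ) * ((n:ℝ) + i + 1)
          = ((n:ℝ) - ((i:ℝ)+1)^2) * ((n:ℝ) + i + 1) * ((2 * n).choose n : ℝ) := by ring
        _ ≤ (n:ℝ) * (((2 * n).choose (n + i + 1) : ℝ)) * ((n:ℝ) + i + 1) := final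
        _ = (n:ℝ) * (((2 * n).choose (n + i + 1) : ℝ)) * ((n:ℝ) + i + 1) := rfl) hpos
    have hc : ((n:ℝ) - ((i:ℝ)+1)^2) = ((n:ℝ) - ((i+1 : ℕ):ℝ)^2) := by push_cast; ring
    calc ((n:ℝ) - ((i+1:ℕ):ℝ)^2) * ((2 * n).choose n : ℝ)
        = ((n:ℝ) - ((i:ℝ)+1)^2) * ((2 * n).choose n : ℝ) := by rw [hc]
      _ ≤ (n:ℝ) * ((2 * n).choose (n + i + 1) : ℝ) := this
      _ = (n:ℝ) * ((2 * n).choose (n + (i+1)) : ℝ) := by ring_nf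

lemma sum_sq_Icc (d : ℕ) : ∑ i ∈ Finset.Icc 1 d, ((i:ℝ))^2
    = (d:ℝ) * (d + 1) * (2 * d + 1) / 6 := by
  induction d with
  | zero => simp
  | succ d ih =>
    rw [Finset.sum_Icc_succ_top (by omega : 1 ≤ d + 1), ih]
    push_cast; ring

lemma Xpos (d N : ℝ) (hd : 27 ≤ d) (h1 : 2*d^2 ≤ N) :
    0 < d*N - d*(d+1)*(2*d+1)/6 := by
  nlinarith [mul_le_mul_of_nonneg_left h1 (show (0:ℝ) ≤ d by linarith),
    mul_le_mul_of_nonneg_right hd (sq_nonneg d),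
    mul_le_mul_of_nonneg_right hd (show (0:ℝ) ≤ d by linarith)]

lemma Xlb (d N : ℝ) (hd : 27 ≤ d) (h1 : 2*d^2 ≤ N) :
    N*(10*d^2 - 3*d - 1) ≤ 12*d*(d*N - d*(d+1)*(2*d+1)/6) := by
  nlinarith [mul_le_mul_of_nonneg_left h1 (show (0:ℝ) ≤ 2*d^2+3*d+1 by positivity)]

lemma hsingle (d : ℝ) (hd : 27 ≤ d) :
    72*((0.3044:ℝ)^2*3.141593)*d^2*(4*d^2+8*d+5) ≤ (10*d^2-3*d-1)^2 := by
  nlinarith [mul_le_mul_of_nonneg_right hd (show (0:ℝ) ≤ d^3 by positivity),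
    mul_le_mul_of_nonneg_right hd (show (0:ℝ) ≤ d^2 by positivity),
    mul_le_mul_of_nonneg_right hd (show (0:ℝ) ≤ d by linarith)]

lemma polybound (d N : ℝ) (hd : 27 ≤ d) (h1 : 2*d^2 ≤ N) (h2 : N < 2*(d+1)^2) :
    (0.3044:ℝ)^2*3.141593*(N^2*(2*N+1)) ≤ 2*(d*N - d*(d+1)*(2*d+1)/6)^2 := by
  have hN0 : (0:ℝ) < N := by nlinarith
  have hq : (0:ℝ) < 10*d^2 - 3*d - 1 := by nlinarith
  have hU0 : (0:ℝ) ≤ N*(10*d^2 - 3*d - 1) := le_of_lt (mul_pos hN0 hq)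
  have hXsq : (N*(10*d^2 - 3*d - 1))^2 ≤ (12*d*(d*N - d*(d+1)*(2*d+1)/6))^2 :=
    pow_le_pow_left₀ hU0 (Xlb d N hd h1) 2
  have hNub : 2*N + 1 ≤ 4*d^2 + 8*d + 5 := by nlinarith
  have hstep : 72*((0.3044:ℝ)^2*3.141593)*d^2*(2*N+1) ≤ (10*d^2-3*d-1)^2 := by
    nlinarith [hsingle d hd,
      mul_le_mul_of_nonneg_left hNub (show (0:ℝ) ≤ 72*((0.3044:ℝ)^2*3.141593)*d^2 by positivity)]
  have h144 : 72*d^2*((0.3044:ℝ)^2*3.141593*(N^2*(2*N+1)))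
      ≤ 72*d^2*(2*(d*N - d*(d+1)*(2*d+1)/6)^2) := by
    nlinarith [mul_le_mul_of_nonneg_left hstep (sq_nonneg N), hXsq]
  have hd2 : (0:ℝ) < 72*d^2 := by positivity
  exact le_of_mul_le_mul_left h144 hd2

set_option maxHeartbeats 1000000 in
theorem stmt10 (n : ℕ) (hn : 1500 ≤ n) (δ : ℕ)
    (hδ : δ = ⌊4 * Real.sqrt ((n : ℝ) / 32)⌋₊) :
    (∑ i ∈ Finset.Icc 1 δ, ((2 * n).choose (n + i) : ℝ)) / 4 ^ n > 0.3044 := by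
  have hnR : (1500:ℝ) ≤ (n:ℝ) := by exact_mod_cast hn
  have hn0 : (0:ℝ) < (n:ℝ) := by linarith
  have hsqrt_eq : 4 * Real.sqrt ((n:ℝ)/32) = Real.sqrt ((n:ℝ)/2) := by
    have h2 : ((n:ℝ)/2) = 16 * ((n:ℝ)/32) := by ring
    rw [h2, Real.sqrt_mul (by norm_num : (0:ℝ) ≤ 16),
      show Real.sqrt 16 = 4 by
        rw [show (16:ℝ) = 4^2 by norm_num, Real.sqrt_sq (by norm_num : (0:ℝ) ≤ 4)]]
  rw [hsqrt_eq] at hδ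
  have hs0 : (0:ℝ) ≤ (n:ℝ)/2 := by linarith
  have hdl : (δ:ℝ) ≤ Real.sqrt ((n:ℝ)/2) := by rw [hδ]; exact Nat.floor_le (Real.sqrt_nonneg _)
  have hdu : Real.sqrt ((n:ℝ)/2) < (δ:ℝ) + 1 := by rw [hδ]; exact Nat.lt_floor_add_one _
  have hsq := Real.sq_sqrt hs0
  have h1R : 2*(δ:ℝ)^2 ≤ (n:ℝ) := by
    nlinarith [Real.sqrt_nonneg ((n:ℝ)/2), Nat.cast_nonneg (α := ℝ) δ]
  have h2R : (n:ℝ) < 2*((δ:ℝ)+1)^2 := by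
    nlinarith [Real.sqrt_nonneg ((n:ℝ)/2)]
  have hδ27 : 27 ≤ δ := by
    by_contra h
    push_neg at h
    have hle : (δ:ℝ) ≤ 26 := by exact_mod_cast Nat.le_of_lt_succ h
    nlinarith
  have hδR : (27:ℝ) ≤ (δ:ℝ) := by exact_mod_cast hδ27
  have hδn : δ ≤ n := by
    have : (δ:ℝ) ≤ (n:ℝ) := by nlinarith
    exact_mod_cast this
  have hC0 : (0:ℝ) < ((2*n).choose n : ℝ) := by
    exact_mod_cast Nat.choose_pos (show n ≤ 2*n by omega)
  -- sum lower bound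
  have hpt : ∀ i ∈ Finset.Icc 1 δ,
      ((n:ℝ) - (i:ℝ)^2)/(n:ℝ) * ((2*n).choose n : ℝ) ≤ ((2*n).choose (n+i) : ℝ) := by
    intro i hi
    have hi' : i ≤ n := le_trans (Finset.mem_Icc.mp hi).2 hδn
    have h := choose_shift_lb n i hi'
    rw [div_mul_eq_mul_div, div_le_iff₀ hn0]
    nlinarith [h]
  have hsumeq : ∑ i ∈ Finset.Icc 1 δ, ((n:ℝ) - (i:ℝ)^2)/(n:ℝ) * ((2*n).choose n : ℝ)
      = ((δ:ℝ)*(n:ℝ) - (δ:ℝ)*((δ:ℝ)+1)*(2*(δ:ℝ)+1)/6)/(n:ℝ) * ((2*n).choose n : ℝ) := by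
    rw [← Finset.sum_mul, ← Finset.sum_div, Finset.sum_sub_distrib, sum_sq_Icc,
      Finset.sum_const, Nat.card_Icc]
    push_cast [Nat.add_sub_cancel]
    ring_nf
  have hsum : ((δ:ℝ)*(n:ℝ) - (δ:ℝ)*((δ:ℝ)+1)*(2*(δ:ℝ)+1)/6)/(n:ℝ) * ((2*n).choose n : ℝ)
      ≤ ∑ i ∈ Finset.Icc 1 δ, ((2*n).choose (n+i) : ℝ) := by
    rw [← hsumeq]
    exact Finset.sum_le_sum hpt
  -- reduce goal
  rw [gt_iff_lt, lt_div_iff₀ (by positivity : (0:ℝ) < (4:ℝ)^n)]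
  refine lt_of_lt_of_le ?_ hsum
  have hXpos : 0 < (δ:ℝ)*(n:ℝ) - (δ:ℝ)*((δ:ℝ)+1)*(2*(δ:ℝ)+1)/6 := Xpos _ _ hδR h1R
  have poly := polybound _ _ hδR h1R h2R
  -- central binomial lower bound
  have hcbR := central_binom_lb n
  have hπ6 : Real.pi < 3.141593 := Real.pi_lt_d6
  have hπ0 := Real.pi_pos
  have h16 : ((4:ℝ)^n)^2 = (16:ℝ)^n := by
    rw [← pow_mul, pow_mul']
    norm_num
  have main : (0.3044:ℝ)^2*(n:ℝ)^2*(Real.pi*(2*(n:ℝ)+1))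
      < 2*((δ:ℝ)*(n:ℝ) - (δ:ℝ)*((δ:ℝ)+1)*(2*(δ:ℝ)+1)/6)^2 := by
    have hfac : (0:ℝ) < (0.3044:ℝ)^2*(n:ℝ)^2*(2*(n:ℝ)+1) := by positivity
    nlinarith [poly, hfac]
  have hchain : (0.3044:ℝ)^2*(n:ℝ)^2*(16:ℝ)^n * (Real.pi*(2*(n:ℝ)+1))
      < ((δ:ℝ)*(n:ℝ) - (δ:ℝ)*((δ:ℝ)+1)*(2*(δ:ℝ)+1)/6)^2*((2*n).choose n : ℝ)^2
        * (Real.pi*(2*(n:ℝ)+1)) := by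
    have hm := mul_lt_mul_of_pos_right main (show (0:ℝ) < (16:ℝ)^n by positivity)
    have hx := mul_le_mul_of_nonneg_left hcbR
      (sq_nonneg ((δ:ℝ)*(n:ℝ) - (δ:ℝ)*((δ:ℝ)+1)*(2*(δ:ℝ)+1)/6))
    nlinarith [hm, hx]
  have h3 : (0.3044:ℝ)^2*(n:ℝ)^2*(16:ℝ)^n
      < ((δ:ℝ)*(n:ℝ) - (δ:ℝ)*((δ:ℝ)+1)*(2*(δ:ℝ)+1)/6)^2*((2*n).choose n : ℝ)^2 :=
    lt_of_mul_lt_mul_right hchain (le_of_lt (by positivity : (0:ℝ) < Real.pi*(2*(n:ℝ)+1)))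
  have key : ((0.3044:ℝ) * 4^n * (n:ℝ))^2
      < (((δ:ℝ)*(n:ℝ) - (δ:ℝ)*((δ:ℝ)+1)*(2*(δ:ℝ)+1)/6) * ((2*n).choose n : ℝ))^2 := by
    have e1 : ((0.3044:ℝ) * 4^n * (n:ℝ))^2 = (0.3044:ℝ)^2*(n:ℝ)^2*((4:ℝ)^n)^2 := by ring
    rw [e1, h16]
    nlinarith [h3]
  have hpos2 : (0:ℝ) ≤ ((δ:ℝ)*(n:ℝ) - (δ:ℝ)*((δ:ℝ)+1)*(2*(δ:ℝ)+1)/6) * ((2*n).choose n : ℝ) :=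
    le_of_lt (mul_pos hXpos hC0)
  have hlt := lt_of_pow_lt_pow_left₀ 2 hpos2 key
  rw [div_mul_eq_mul_div, lt_div_iff₀ hn0]
  nlinarith [hlt]
end

section
/- For every integer n ≥ 1500, setting δ = ⌊4·√(n/32)⌋, one has 4^{-n} · Σ_{i = -δ+1}^{δ} C(2n, n+i) > 0.6088. -/
/-!
Stepping from `C(2n, n+j)` to `C(2n, n+j+1)` multiplies by `(n-j)/(n+j+1)`, and an induction on `j`
gives `C(2n, n+j) ≥ (1 - j²/n) C(2n, n)`. Summed over the window `-δ < i ≤ δ` this yields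
`n Σ ≥ (2δn - (2δ³+δ)/3) C(2n, n) ≥ δ(5n-1)/3 · C(2n, n)`, using `2δ² ≤ n`.
On the other side, Wallis' inequality `W n ≤ π/2` is `4ⁿ ≤ √(π(n+1/2)) C(2n, n)`.
As `δ ≈ √(n/2)`, the quotient is at least about `5/(3√(2π)) ≈ 0.665`.
-/

open Finset Real

lemma choose_two_mul_add_succ_mul (n j : ℕ) :
    (2 * n).choose (n + j + 1) * (n + j + 1) = (2 * n).choose (n + j) * (n - j) := by
  rw [Nat.choose_succ_right_eq, show 2 * n - (n + j) = n - j by omega]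

lemma sub_sq_mul_choose_le (n j : ℕ) :
    ((n : ℝ) - j ^ 2) * (2 * n).choose n ≤ n * (2 * n).choose (n + j) := by
  induction j with
  | zero => simp
  | succ j ih =>
    have hC : (0 : ℝ) ≤ (2 * n).choose n := by positivity
    rcases lt_or_ge j n with hjn | hnj
    · have hratio := congrArg (Nat.cast (R := ℝ)) (choose_two_mul_add_succ_mul n j)
      push_cast [Nat.cast_sub hjn.le] at hratio
      have hj : (j : ℝ) < n := by exact_mod_cast hjn
      rw [← add_assoc]
      push_cast
      refine le_of_mul_le_mul_right ?_ (by positivity : (0 : ℝ) < n + j + 1)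
      rw [mul_assoc (n : ℝ), hratio]
      -- `(n - j²)(n - j) - (n - (j+1)²)(n + j + 1) = j³ + (j+1)³`
      nlinarith [mul_le_mul_of_nonneg_right ih (sub_nonneg.2 hj.le),
        mul_nonneg (by positivity : (0 : ℝ) ≤ (j : ℝ) ^ 3 + (j + 1) ^ 3) hC]
    · have hlt : (n : ℝ) < ((j + 1 : ℕ) : ℝ) ^ 2 := by
        have : (n : ℝ) ≤ j := by exact_mod_cast hnj
        push_cast
        nlinarith
      nlinarith [(by positivity : (0 : ℝ) ≤ n * (2 * n).choose (n + (j + 1)))]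

lemma chooseZ_two_mul_add {n : ℕ} {i : ℤ} (hi : |i| ≤ n) :
    chooseZ (2 * n) (n + i) = (2 * n).choose (n + i.natAbs) := by
  obtain ⟨hl, hr⟩ := abs_le.1 hi
  rw [chooseZ, if_pos (by omega)]
  rcases le_total 0 i with h | h
  · congr 1
    omega
  · rw [← Nat.choose_symm (by omega)]
    congr 1
    omega

lemma sub_sq_mul_choose_le_chooseZ (n : ℕ) (i : ℤ) :
    ((n : ℝ) - i ^ 2) * (2 * n).choose n ≤ n * chooseZ (2 * n) (n + i) := by
  rcases le_or_gt |i| n with hi | hi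
  · rw [chooseZ_two_mul_add hi, ← sq_abs, ← Int.cast_abs, Int.abs_eq_natAbs]
    exact_mod_cast sub_sq_mul_choose_le n i.natAbs
  · have hlt : (n : ℝ) < (i : ℝ) ^ 2 := by
      rw [← sq_abs, ← Int.cast_abs]
      have : (n : ℝ) + 1 ≤ ((|i| : ℤ) : ℝ) := by exact_mod_cast hi
      nlinarith
    nlinarith [(by positivity : (0 : ℝ) ≤ (2 * n).choose n),
      (by positivity : (0 : ℝ) ≤ n * chooseZ (2 * n) (n + i))]

lemma sum_Icc_neg_add_one_succ {M : Type*} [AddCommMonoid M] (f : ℤ → M) (d : ℕ) :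
    ∑ i ∈ Icc (-((d + 1 : ℕ) : ℤ) + 1) (d + 1 : ℕ), f i
      = ∑ i ∈ Icc (-(d : ℤ) + 1) d, f i + f (-d) + f (d + 1) := by
  rw [show -((d + 1 : ℕ) : ℤ) + 1 = (-(d : ℤ) + 1) - 1 by push_cast; ring, Nat.cast_succ,
    ← insert_Icc_left_eq_Icc_sub_one (by omega), ← insert_Icc_right_eq_Icc_add_one (by omega),
    sum_insert (by simp; omega), sum_insert (by simp), add_sub_cancel_right]
  abel

lemma sum_Icc_neg_add_one_sub_sq (c : ℝ) (d : ℕ) :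
    ∑ i ∈ Icc (-(d : ℤ) + 1) d, (c - (i : ℝ) ^ 2) = 2 * d * c - (2 * d ^ 3 + d) / 3 := by
  induction d with
  | zero => simp
  | succ d ih =>
    rw [sum_Icc_neg_add_one_succ, ih]
    push_cast
    ring

lemma sub_mul_choose_le_mul_sum_chooseZ (n d : ℕ) :
    (2 * d * n - (2 * d ^ 3 + d) / 3) * (2 * n).choose n
      ≤ n * ∑ i ∈ Icc (-(d : ℤ) + 1) d, (chooseZ (2 * n) (n + i) : ℝ) := by
  rw [← sum_Icc_neg_add_one_sub_sq, sum_mul, mul_sum]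
  exact sum_le_sum fun i _ => sub_sq_mul_choose_le_chooseZ n i

lemma four_pow_sq_le_pi_mul_choose_sq (n : ℕ) :
    ((4 : ℝ) ^ n) ^ 2 ≤ π * (n + 1 / 2) * ((2 * n).choose n) ^ 2 := by
  have hW := Wallis.W_le n
  have hfact : ((2 * n).factorial : ℝ) = (2 * n).choose n * n.factorial ^ 2 := by
    have := Nat.choose_mul_factorial_mul_factorial (show n ≤ 2 * n by omega)
    rw [show 2 * n - n = n by omega] at this
    rw [← this]
    push_cast
    ring
  have hpow : (2 : ℝ) ^ (4 * n) = ((4 : ℝ) ^ n) ^ 2 := by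
    rw [← pow_mul, show (4 : ℝ) = 2 ^ 2 by norm_num, ← pow_mul]
    ring_nf
  have hC : (0 : ℝ) < (2 * n).choose n := by exact_mod_cast Nat.choose_pos (by omega)
  rw [Wallis.W_eq_factorial_ratio, hfact, hpow, div_le_iff₀ (by positivity),
    show π / 2 * (((2 * n).choose n * n.factorial ^ 2) ^ 2 * (2 * n + 1))
      = π * (n + 1 / 2) * ((2 * n).choose n) ^ 2 * n.factorial ^ 4 by ring] at hW
  exact le_of_mul_le_mul_right hW (by positivity)

lemma pi_mul_sq_lt_sq_of_two_mul_sq_le {n d : ℝ} (hd : 27 ≤ d) (hlo : 2 * d ^ 2 ≤ n)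
    (hhi : n < 2 * (d + 1) ^ 2) :
    0.6088 ^ 2 * π * (n + 1 / 2) * n ^ 2 < (2 * d * n - (2 * d ^ 3 + d) / 3) ^ 2 := by
  have hn : 1458 ≤ n := by nlinarith
  have hL : d * (5 * n - 1) / 3 ≤ 2 * d * n - (2 * d ^ 3 + d) / 3 := by nlinarith
  have hd2 : n * (27 / 28) ^ 2 / 2 ≤ d ^ 2 := by nlinarith
  have hL2 : n * (27 / 28) ^ 2 * (5 * n - 1) ^ 2 / 18 ≤ (2 * d * n - (2 * d ^ 3 + d) / 3) ^ 2 := by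
    have h0 : 0 ≤ d * (5 * n - 1) / 3 := by nlinarith
    nlinarith [pow_le_pow_left₀ h0 hL 2]
  nlinarith [pi_pos, pi_lt_d4]

lemma lt_sum_chooseZ_div_four_pow {n δ : ℕ} (hδ : 27 ≤ δ) (hlo : 2 * δ ^ 2 ≤ n)
    (hhi : n < 2 * (δ + 1) ^ 2) :
    0.6088 < (∑ i ∈ Icc (-(δ : ℤ) + 1) δ, (chooseZ (2 * n) (n + i) : ℝ)) / 4 ^ n := by
  have hδR : (27 : ℝ) ≤ δ := by exact_mod_cast hδ
  have hloR : 2 * (δ : ℝ) ^ 2 ≤ n := by exact_mod_cast hlo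
  have hhiR : (n : ℝ) < 2 * (δ + 1) ^ 2 := by exact_mod_cast hhi
  have hL : 0 < 2 * (δ : ℝ) * n - (2 * δ ^ 3 + δ) / 3 := by
    nlinarith [mul_le_mul_of_nonneg_left hloR (by positivity : (0 : ℝ) ≤ δ)]
  have hnum := sub_mul_choose_le_mul_sum_chooseZ n δ
  have hkey := pi_mul_sq_lt_sq_of_two_mul_sq_le hδR hloR hhiR
  have hC : (0 : ℝ) < (2 * n).choose n := by exact_mod_cast Nat.choose_pos (by omega)
  set L : ℝ := 2 * δ * n - (2 * δ ^ 3 + δ) / 3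
  set C : ℝ := ((2 * n).choose n : ℝ)
  have hsq : (0.6088 * 4 ^ n * n) ^ 2 < (L * C) ^ 2 := by
    calc (0.6088 * 4 ^ n * n) ^ 2 = 0.6088 ^ 2 * n ^ 2 * ((4 : ℝ) ^ n) ^ 2 := by ring
      _ ≤ 0.6088 ^ 2 * n ^ 2 * (π * (n + 1 / 2) * C ^ 2) := by
        gcongr
        exact four_pow_sq_le_pi_mul_choose_sq n
      _ = 0.6088 ^ 2 * π * (n + 1 / 2) * n ^ 2 * C ^ 2 := by ring
      _ < L ^ 2 * C ^ 2 := by gcongr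
      _ = (L * C) ^ 2 := by ring
  have hlt := (abs_lt_of_sq_lt_sq' hsq (by positivity)).2
  have hn : (0 : ℝ) < n := by nlinarith
  rw [lt_div_iff₀ (by positivity)]
  nlinarith

lemma two_mul_sq_le_and_lt_of_eq_floor_sqrt {n δ : ℕ} (hδ : δ = ⌊√((n : ℝ) / 2)⌋₊) :
    2 * δ ^ 2 ≤ n ∧ n < 2 * (δ + 1) ^ 2 := by
  obtain ⟨hlo, hhi⟩ := (Nat.floor_eq_iff (sqrt_nonneg _)).1 hδ.symm
  rw [le_sqrt (by positivity) (by positivity)] at hlo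
  rw [sqrt_lt' (by positivity)] at hhi
  constructor
  · exact_mod_cast (by push_cast; linarith : ((2 * δ ^ 2 : ℕ) : ℝ) ≤ n)
  · exact_mod_cast (by push_cast; linarith : (n : ℝ) < ((2 * (δ + 1) ^ 2 : ℕ) : ℝ))

lemma four_mul_sqrt_div_32 (x : ℝ) : 4 * √(x / 32) = √(x / 2) := by
  rw [show x / 2 = 4 ^ 2 * (x / 32) by ring, sqrt_mul (by norm_num), sqrt_sq (by norm_num)]

theorem stmt11 (n : ℕ) (hn : 1500 ≤ n) (δ : ℕ)
    (hδ : δ = ⌊4 * Real.sqrt ((n : ℝ) / 32)⌋₊) :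
    (∑ i ∈ Finset.Icc (-(δ : ℤ) + 1) (δ : ℤ), (chooseZ (2 * n) ((n : ℤ) + i) : ℝ)) / 4 ^ n
      > 0.6088 := by
  rw [four_mul_sqrt_div_32] at hδ
  obtain ⟨hlo, hhi⟩ := two_mul_sq_le_and_lt_of_eq_floor_sqrt hδ
  exact lt_sum_chooseZ_div_four_pow (by nlinarith) hlo hhi
end

section
/- For every integer n ≥ 1500, setting δ = ⌊4·√(n/32)⌋, one has 4^{-n} · Σ_{i = -δ+1}^{δ-1} C(2n, n+i) > 0.5975. -/
open Finset Real

lemma choose_lower (n : ℕ) (hn : 0 < n) : ∀ i, i ≤ n →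
    ((2*n).choose n : ℝ) * (1 - (i:ℝ)^2 / n) ≤ ((2*n).choose (n + i) : ℝ) := by
  intro i
  induction i with
  | zero => simp
  | succ i ih =>
    intro h
    have hi : i ≤ n := by omega
    have ih' := ih hi
    have key : ((2*n).choose (n+(i+1)) : ℝ) * ((n:ℝ)+i+1) = ((2*n).choose (n+i)) * ((n:ℝ) - i) := by
      have h1 := Nat.choose_succ_right_eq (2*n) (n+i)
      have h2 : 2*n - (n+i) = n - i := by omega
      rw [h2] at h1
      have h3 : (((2*n).choose (n+i+1) * (n+i+1) : ℕ) : ℝ) = (((2*n).choose (n+i) * (n-i) : ℕ) : ℝ) := by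
        exact_mod_cast congrArg Nat.cast h1
      push_cast [Nat.cast_sub hi] at h3
      have h4 : n + (i+1) = n + i + 1 := by omega
      rw [h4]
      linarith
    have hpos : (0:ℝ) < (n:ℝ)+i+1 := by positivity
    have hnn : (0:ℝ) < (n:ℝ) := by exact_mod_cast hn
    have hin : (i:ℝ) ≤ n := by exact_mod_cast hi
    set C : ℝ := ((2*n).choose n : ℝ) with hC
    have hCnn : (0:ℝ) ≤ C := Nat.cast_nonneg _
    -- step inequality
    have step : C * (1 - ((i:ℝ)+1)^2 / n) * ((n:ℝ)+i+1) ≤ (C * (1 - (i:ℝ)^2/n)) * ((n:ℝ) - i) := by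
      have expand : (C * (1 - (i:ℝ)^2/n)) * ((n:ℝ) - i) - C * (1 - ((i:ℝ)+1)^2 / n) * ((n:ℝ)+i+1)
          = C * ((i:ℝ)^3 + ((i:ℝ)+1)^3) / n := by
        field_simp
        ring
      have hpos2 : 0 ≤ C * ((i:ℝ)^3 + ((i:ℝ)+1)^3) / n := by positivity
      linarith
    have mono : (C * (1 - (i:ℝ)^2/n)) * ((n:ℝ) - i) ≤ ((2*n).choose (n+i) : ℝ) * ((n:ℝ) - i) :=
      mul_le_mul_of_nonneg_right ih' (by linarith)
    have final : C * (1 - ((i:ℝ)+1)^2 / n) * ((n:ℝ)+i+1) ≤ ((2*n).choose (n+(i+1)) : ℝ) * ((n:ℝ)+i+1) := by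
      rw [key]; linarith
    have res := le_of_mul_le_mul_right final hpos
    push_cast
    exact res

lemma sq_sum (m : ℕ) : ∑ i ∈ Finset.Icc (-(m:ℤ)) m, ((i:ℝ))^2 = (m:ℝ)*(m+1)*(2*m+1)/3 := by
  induction m with
  | zero => simp
  | succ m ih =>
    have hset : Finset.Icc (-((m:ℤ)+1)) ((m:ℤ)+1)
        = insert (-((m:ℤ)+1)) (insert ((m:ℤ)+1) (Finset.Icc (-(m:ℤ)) m)) := by
      ext x; simp only [Finset.mem_Icc, Finset.mem_insert]; omega
    push_cast
    rw [hset, Finset.sum_insert (by simp only [Finset.mem_Icc, Finset.mem_insert, not_or, not_and, not_le]; omega), Finset.sum_insert (by simp only [Finset.mem_Icc, not_and, not_le]; omega)]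
    push_cast at ih
    rw [ih]; push_cast; ring

lemma stirling_pos (k : ℕ) (hk : 1 ≤ k) : 0 < Stirling.stirlingSeq k := by
  obtain ⟨m, rfl⟩ : ∃ m, k = m + 1 := ⟨k - 1, by omega⟩
  exact Stirling.stirlingSeq'_pos m

lemma stirling_ge_sqrt_pi (k : ℕ) (hk : 1 ≤ k) : Real.sqrt π ≤ Stirling.stirlingSeq k := by
  obtain ⟨m, rfl⟩ : ∃ m, k = m + 1 := ⟨k - 1, by omega⟩
  have hlim : Filter.Tendsto (Stirling.stirlingSeq ∘ Nat.succ) Filter.atTop (nhds (Real.sqrt π)) :=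
    Stirling.tendsto_stirlingSeq_sqrt_pi.comp (Filter.tendsto_add_atTop_nat 1)
  refine le_of_tendsto hlim ?_
  filter_upwards [Filter.eventually_ge_atTop m] with j hj
  exact Stirling.stirlingSeq'_antitone hj

lemma stirling_le (k l : ℕ) (hk : 1 ≤ k) (hkl : k ≤ l) :
    Stirling.stirlingSeq l ≤ Stirling.stirlingSeq k := by
  obtain ⟨m, rfl⟩ : ∃ m, k = m + 1 := ⟨k - 1, by omega⟩
  obtain ⟨j, rfl⟩ : ∃ j, l = j + 1 := ⟨l - 1, by omega⟩
  exact Stirling.stirlingSeq'_antitone (by omega)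

lemma fact_eq (k : ℕ) (hk : 1 ≤ k) :
    (Nat.factorial k : ℝ) = Stirling.stirlingSeq k * (Real.sqrt (2*(k:ℝ)) * ((k:ℝ)/Real.exp 1)^k) := by
  show (Nat.factorial k : ℝ) = _
  rw [Stirling.stirlingSeq]
  rw [div_mul_cancel₀]
  positivity

lemma central_bound (n : ℕ) (hn : 8 ≤ n) :
    Real.sqrt π / (Stirling.stirlingSeq 8)^2 * 4^n / Real.sqrt n ≤ ((2*n).choose n : ℝ) := by
  have hn1 : 1 ≤ n := by omega
  have hnR : (0:ℝ) < n := by exact_mod_cast hn1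
  set a := Stirling.stirlingSeq n with ha
  set b := Stirling.stirlingSeq (2*n) with hb
  have hapos : 0 < a := stirling_pos n hn1
  have hbpos : 0 < b := stirling_pos (2*n) (by omega)
  have hsq : 0 < Real.sqrt n := Real.sqrt_pos.mpr hnR
  have hEpos : (0:ℝ) < ((n:ℝ)/Real.exp 1)^n := by positivity
  -- key identity
  have hfacN : (2*n).choose n * Nat.factorial n * Nat.factorial n = Nat.factorial (2*n) := by
    have := Nat.choose_mul_factorial_mul_factorial (by omega : n ≤ 2*n)
    simpa [show 2*n - n = n by omega] using this
  have hfac : (((2*n).choose n : ℕ) : ℝ) * (Nat.factorial n : ℝ) * (Nat.factorial n : ℝ) = (Nat.factorial (2*n) : ℝ) := by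
    exact_mod_cast congrArg Nat.cast hfacN
  rw [fact_eq n hn1, fact_eq (2*n) (by omega)] at hfac
  set C : ℝ := (((2*n).choose n : ℕ) : ℝ) with hCdef
  set E : ℝ := ((n:ℝ)/Real.exp 1)^n with hE
  have e1 : Real.sqrt (2*((2*n : ℕ):ℝ)) = 2 * Real.sqrt n := by
    push_cast
    rw [show (2:ℝ)*(2*(n:ℝ)) = (2*Real.sqrt n)^2 by
      rw [mul_pow, Real.sq_sqrt hnR.le]; ring]
    exact Real.sqrt_sq (by positivity)
  have e2 : (((2*n:ℕ):ℝ)/Real.exp 1)^(2*n) = 4^n * E^2 := by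
    push_cast
    rw [show (2*(n:ℝ))/Real.exp 1 = 2 * ((n:ℝ)/Real.exp 1) by ring, mul_pow,
      show (2:ℝ)^(2*n) = 4^n by rw [pow_mul]; norm_num,
      show ((n:ℝ)/Real.exp 1)^(2*n) = E^2 by rw [hE, ← pow_mul, mul_comm n 2]]
  rw [e1, e2] at hfac
  have hsqn : Real.sqrt n ^ 2 = n := Real.sq_sqrt hnR.le
  have e3 : Real.sqrt (2*(n:ℝ)) ^ 2 = 2*n := Real.sq_sqrt (by positivity)
  have key : C * a^2 * Real.sqrt n = b * 4^n := by
    have hne : (2*Real.sqrt n*E^2) ≠ 0 := by positivity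
    apply mul_right_cancel₀ hne
    have lhs_eq : C*a^2*Real.sqrt n * (2*Real.sqrt n*E^2)
        = C * (a*(Real.sqrt (2*(n:ℝ))*E)) * (a*(Real.sqrt (2*(n:ℝ))*E)) := by
      linear_combination (2*C*a^2*E^2) * hsqn - (C*a^2*E^2) * e3
    rw [lhs_eq, hfac]; ring
  have ha8 : a ≤ Stirling.stirlingSeq 8 := stirling_le 8 n (by norm_num) hn
  have h8pos : 0 < Stirling.stirlingSeq 8 := stirling_pos 8 (by norm_num)
  have hbge : Real.sqrt π ≤ b := stirling_ge_sqrt_pi (2*n) (by omega)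
  have hratio : Real.sqrt π / (Stirling.stirlingSeq 8)^2 ≤ b / a^2 :=
    div_le_div₀ hbpos.le hbge (by positivity) (by nlinarith)
  have hCeq : C = b / a^2 * 4^n / Real.sqrt n := by
    field_simp
    linear_combination key
  rw [hCdef] at hCeq ⊢
  rw [hCeq]
  gcongr

lemma s8_bound : Stirling.stirlingSeq 8 ≤ 1.7915 := by
  have hpe : (0:ℝ) < Real.exp 1 := Real.exp_pos 1
  have he8 : Real.exp 1 ^ 8 ≤ 2981 := by
    calc Real.exp 1 ^ 8 ≤ 2.7182818286^8 :=
          pow_le_pow_left₀ hpe.le Real.exp_one_lt_d9.le 8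
      _ ≤ 2981 := by norm_num
  have h16 : Real.sqrt (2*((8:ℕ):ℝ)) = 4 := by
    rw [show (2*((8:ℕ):ℝ)) = 4^2 by norm_num]
    rw [Real.sqrt_sq]; norm_num
  have heq : Stirling.stirlingSeq 8 = 40320 * Real.exp 1 ^ 8 / (4 * 8^8) := by
    show (Nat.factorial 8 : ℝ) / (Real.sqrt (2*((8:ℕ):ℝ)) * (((8:ℕ):ℝ)/Real.exp 1)^8) = _
    rw [h16]
    rw [show (((8:ℕ):ℝ)/Real.exp 1)^8 = 8^8 / Real.exp 1^8 by rw [div_pow]; norm_num]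
    rw [show (Nat.factorial 8 : ℝ) = 40320 by norm_num [Nat.factorial]]
    field_simp
  rw [heq]
  rw [div_le_iff₀ (by norm_num)]
  nlinarith [he8]

lemma numeric_final (A B W s : ℝ) (hA : 1.772453 ≤ A) (hB0 : 0 < B) (hB : B ≤ 1.7915)
    (hs : 27.38 ≤ s) (hW0 : 0 < W) (hW : W ≤ 1.4142136) :
    0.5975 < A / B^2 * (5/6 * (2*s-3)) / (W * s) := by
  rw [lt_div_iff₀ (by positivity)]
  rw [div_mul_eq_mul_div, lt_div_iff₀ (by positivity)]
  nlinarith [mul_pos hW0 (by linarith : (0:ℝ) < s), sq_nonneg B, mul_le_mul hB hB hB0.le (by norm_num : (0:ℝ) ≤ 1.7915),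
    mul_le_mul hW (le_refl s) (by linarith) (by norm_num : (0:ℝ) ≤ 1.4142136)]

set_option maxHeartbeats 1000000 in
theorem stmt12 (n : ℕ) (hn : 1500 ≤ n) (δ : ℕ)
    (hδ : δ = ⌊4 * Real.sqrt ((n : ℝ) / 32)⌋₊) :
    (∑ i ∈ Finset.Icc (-(δ : ℤ) + 1) ((δ : ℤ) - 1), (chooseZ (2 * n) ((n : ℤ) + i) : ℝ)) / 4 ^ n
      > 0.5975 := by
  have hn0 : 0 < n := by omega
  have hnR : (1500:ℝ) ≤ (n:ℝ) := by exact_mod_cast hn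
  have hnR0 : (0:ℝ) < (n:ℝ) := by linarith
  have hkey : 4 * Real.sqrt ((n:ℝ)/32) = Real.sqrt ((n:ℝ)/2) := by
    rw [show (n:ℝ)/2 = 4^2 * ((n:ℝ)/32) by ring, Real.sqrt_mul (by norm_num) _,
      Real.sqrt_sq (by norm_num)]
  set s := Real.sqrt ((n:ℝ)/2) with hs_def
  have hs0 : 0 ≤ s := Real.sqrt_nonneg _
  have hs2 : s^2 = (n:ℝ)/2 := Real.sq_sqrt (by positivity)
  have hδs : δ = ⌊s⌋₊ := by rw [hδ, hkey]
  have hδ_le : (δ:ℝ) ≤ s := by rw [hδs]; exact Nat.floor_le hs0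
  have hδ_gt : s < (δ:ℝ) + 1 := by rw [hδs]; exact_mod_cast Nat.lt_floor_add_one s
  have hs_ge : (27.38:ℝ) ≤ s := by
    rw [hs_def]
    rw [show (27.38:ℝ) = Real.sqrt (27.38^2) by rw [Real.sqrt_sq]; norm_num]
    apply Real.sqrt_le_sqrt; nlinarith
  have hδ27 : 27 ≤ δ := by
    rw [hδs]; apply Nat.le_floor; push_cast; linarith
  have hδn : δ ≤ n := by
    have h1 : (δ:ℝ) ≤ (n:ℝ) := by nlinarith
    exact_mod_cast h1
  set m : ℕ := δ - 1 with hm_def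
  have hmδ : (m:ℤ) = (δ:ℤ) - 1 := by
    have : 1 ≤ δ := by omega
    push_cast [hm_def]; omega
  have hmn : m ≤ n := by omega
  -- rewrite interval
  have hIcc : Finset.Icc (-(δ:ℤ)+1) ((δ:ℤ)-1) = Finset.Icc (-(m:ℤ)) (m:ℤ) := by
    congr 1 <;> omega
  rw [hIcc]
  set C : ℝ := ((2*n).choose n : ℝ) with hC_def
  have hCpos : (0:ℝ) < C := by
    rw [hC_def]; exact_mod_cast Nat.choose_pos (by omega : n ≤ 2*n)
  -- chooseZ = choose on our range, and termwise lower bound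
  have hterm : ∀ i ∈ Finset.Icc (-(m:ℤ)) (m:ℤ),
      C * (1 - (i:ℝ)^2/(n:ℝ)) ≤ (chooseZ (2*n) ((n:ℤ)+i) : ℝ) := by
    intro i hi
    simp only [Finset.mem_Icc] at hi
    have hjn : i.natAbs ≤ n := by omega
    have hcz : chooseZ (2*n) ((n:ℤ)+i) = (2*n).choose ((n:ℤ)+i).toNat := by
      rw [chooseZ, if_pos (by omega)]
    rw [hcz]
    have hsq_eq : (i:ℝ)^2 = ((i.natAbs:ℕ):ℝ)^2 := by
      rw [Nat.cast_natAbs, Int.cast_abs, sq_abs]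
    rw [hsq_eq]
    rcases le_or_gt 0 i with hpos | hneg
    · have he : ((n:ℤ)+i).toNat = n + i.natAbs := by omega
      rw [he]; exact choose_lower n hn0 i.natAbs hjn
    · have he : ((n:ℤ)+i).toNat = n - i.natAbs := by omega
      have hsymm : (2*n).choose (n - i.natAbs) = (2*n).choose (n + i.natAbs) := by
        rw [← Nat.choose_symm (show n + i.natAbs ≤ 2*n by omega)]
        congr 1; omega
      rw [he, hsymm]; exact choose_lower n hn0 i.natAbs hjn
  set T : ℝ := (2*(m:ℝ)+1) - ((m:ℝ)*((m:ℝ)+1)*(2*(m:ℝ)+1)/3)/(n:ℝ) with hT_def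
  have hsum_eq : ∑ i ∈ Finset.Icc (-(m:ℤ)) (m:ℤ), C * (1 - (i:ℝ)^2/(n:ℝ)) = C * T := by
    rw [← Finset.mul_sum]
    congr 1
    rw [Finset.sum_sub_distrib, Finset.sum_const, ← Finset.sum_div, sq_sum m]
    rw [Int.card_Icc]
    have : ((m:ℤ) + 1 - -(m:ℤ)).toNat = 2*m+1 := by omega
    rw [this]
    push_cast; ring
  have hsum_ge : C * T ≤ ∑ i ∈ Finset.Icc (-(m:ℤ)) (m:ℤ), (chooseZ (2*n) ((n:ℤ)+i) : ℝ) := by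
    rw [← hsum_eq]; exact Finset.sum_le_sum hterm
  -- bound T
  have hδsq : (δ:ℝ)^2 ≤ (n:ℝ)/2 := by nlinarith
  have hmR : (m:ℝ) = (δ:ℝ) - 1 := by exact_mod_cast hmδ
  have hT_ge : 5/6 * (2*s - 3) ≤ T := by
    have h2m : 2*s - 3 ≤ 2*(m:ℝ)+1 := by rw [hmR]; linarith
    have hmm : (m:ℝ)*((m:ℝ)+1) ≤ (n:ℝ)/2 := by rw [hmR]; nlinarith
    have h2m0 : (0:ℝ) < 2*(m:ℝ)+1 := by positivity
    have : (m:ℝ)*((m:ℝ)+1)*(2*(m:ℝ)+1)/3/(n:ℝ) ≤ (2*(m:ℝ)+1)/6 := by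
      rw [div_div, div_le_div_iff₀ (by positivity) (by norm_num)]
      nlinarith
    rw [hT_def]; linarith
  have hT_pos : (0:ℝ) < 5/6 * (2*s-3) := by nlinarith
  -- central binomial bound
  have hcb : Real.sqrt π / (Stirling.stirlingSeq 8)^2 * 4^n / Real.sqrt n ≤ C :=
    central_bound n (by omega)
  have hsqrtn : Real.sqrt (n:ℝ) = Real.sqrt 2 * s := by
    rw [hs_def, ← Real.sqrt_mul (by norm_num : (0:ℝ) ≤ 2)]
    congr 1; ring
  -- numerics
  have hs8pos : 0 < Stirling.stirlingSeq 8 := by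
    have := Stirling.stirlingSeq'_pos 7; simpa using this
  have hApi : (1.772453:ℝ) ≤ Real.sqrt π := by
    rw [show (1.772453:ℝ) = Real.sqrt (1.772453^2) by rw [Real.sqrt_sq]; norm_num]
    apply Real.sqrt_le_sqrt; nlinarith [Real.pi_gt_d6]
  have hW2 : Real.sqrt 2 ≤ 1.4142136 := by
    rw [show (1.4142136:ℝ) = Real.sqrt (1.4142136^2) by rw [Real.sqrt_sq]; norm_num]
    apply Real.sqrt_le_sqrt; norm_num
  have hW0 : (0:ℝ) < Real.sqrt 2 := by positivity
  have hnum := numeric_final (Real.sqrt π) (Stirling.stirlingSeq 8) (Real.sqrt 2) s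
    hApi hs8pos s8_bound hs_ge hW0 hW2
  -- assemble
  rw [gt_iff_lt, lt_div_iff₀ (by positivity : (0:ℝ) < (4:ℝ)^n)]
  set K : ℝ := Real.sqrt π / (Stirling.stirlingSeq 8)^2 with hK_def
  have hKpos : 0 < K := by rw [hK_def]; positivity
  have hK4 : 0 < K * 4^n / Real.sqrt (n:ℝ) := by positivity
  have h4 : K * 4^n / Real.sqrt (n:ℝ) * (5/6 * (2*s-3)) ≤ C * T :=
    mul_le_mul hcb hT_ge hT_pos.le hCpos.le
  have h5 : (0.5975:ℝ) * 4^n < K * 4^n / Real.sqrt (n:ℝ) * (5/6 * (2*s-3)) := by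
    have heq : K * 4^n / Real.sqrt (n:ℝ) * (5/6 * (2*s-3))
        = K * (5/6 * (2*s-3)) / (Real.sqrt 2 * s) * 4^n := by
      rw [hsqrtn]; ring
    rw [heq]
    apply mul_lt_mul_of_pos_right _ (by positivity : (0:ℝ) < (4:ℝ)^n)
    exact hnum
  calc (0.5975:ℝ) * 4^n < K * 4^n / Real.sqrt (n:ℝ) * (5/6 * (2*s-3)) := h5
    _ ≤ C * T := h4
    _ ≤ _ := hsum_ge
end
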